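/- arXiv:math/0205139 — 7 statements merged into one kernel-verified Lean document; each statement's English description precedes it below -/
import Mathlib

section
/- Let f : [0,∞) → ℂ be locally integrable, let W(t) := [[0, f(t)], [conj(f(t)), 0]] ∈ M₂(ℂ), and let G : [0,∞) → M₂(ℂ) be continuous with G(x) = 1 + ∫₀ˣ W(t)·G(t) dt for all x ≥ 0. Then for every x ≥ 0 the matrix G(x) is of SU(1,1) form: (G(x))₂₁ = conj((G(x))₁₂), (G(x))₂₂ = conj((G(x))₁₁), and |(G(x))₁₁|² − |(G(x))₁₂|² = 1; in particular det G(x) = 1 and |(G(x))₁₁| ≥ 1. -/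
open MeasureTheory Set

/-- The off-diagonal matrix potential built from a scalar function `f`. -/
noncomputable def WmatOf (f : ℝ → ℂ) (t : ℝ) : Matrix (Fin 2) (Fin 2) ℂ :=
  !![0, f t; (starRingEnd ℂ) (f t), 0]

/-- `G` is a (continuous) solution on `[0,∞)` of `G(x) = 1 + ∫₀ˣ W(t)·G(t) dt`
where `W(t) = [[0, f(t)], [conj f(t), 0]]`. -/
def IsSolutionOf (f : ℝ → ℂ) (G : ℝ → Matrix (Fin 2) (Fin 2) ℂ) : Prop :=
  ContinuousOn G (Set.Ici 0) ∧
  ∀ x : ℝ, 0 ≤ x → ∀ i j : Fin 2,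
    G x i j = (1 : Matrix (Fin 2) (Fin 2) ℂ) i j +
      ∫ t in (0:ℝ)..x, (WmatOf f t * G t) i j

/-!
For `σ = !![0, 1; 1, 0]`, conjugation `M ↦ σ M̄ σ` (here `(M.submatrix Fin.rev Fin.rev).map conj`)
fixes `W(t)`, so `t ↦ σ Ḡ(t) σ` solves the same Volterra equation as `G`. Solutions are unique by
a Gronwall argument, hence `G = σ Ḡ σ`, which is the SU(1,1) shape. Since `f` is only locally
integrable there are no derivatives to work with; instead, the product rule for primitives
(Fubini on the triangle `s ≤ t`) shows `det G(x) = 1 + ∫₀ˣ tr W(t) det G(t) dt = 1`, and then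
`|G₀₀|² - |G₀₁|² = det G = 1`.
-/

lemma integral_mul_integral {𝕜 : Type*} [RCLike 𝕜] {F H : ℝ → 𝕜} {X : ℝ} (hX : 0 ≤ X)
    (hF : IntegrableOn F (Ioc 0 X)) (hH : IntegrableOn H (Ioc 0 X)) :
    (∫ t in (0:ℝ)..X, F t) * (∫ t in (0:ℝ)..X, H t) =
      (∫ t in (0:ℝ)..X, F t * ∫ s in (0:ℝ)..t, H s) +
      ∫ t in (0:ℝ)..X, (∫ s in (0:ℝ)..t, F s) * H t := by
  set μ := volume.restrict (Ioc (0:ℝ) X)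
  have hK : Integrable (fun p : ℝ × ℝ => F p.1 * H p.2) (μ.prod μ) := hF.mul_prod hH
  set T := {p : ℝ × ℝ | p.2 ≤ p.1}
  have hT : MeasurableSet T := measurableSet_le measurable_snd measurable_fst
  have hlower : ∫ p in T, F p.1 * H p.2 ∂(μ.prod μ) =
      ∫ t in (0:ℝ)..X, F t * ∫ s in (0:ℝ)..t, H s := by
    rw [← integral_indicator hT, integral_prod _ (hK.indicator hT),
      intervalIntegral.integral_of_le hX]
    refine setIntegral_congr_fun measurableSet_Ioc fun t ht => ?_
    have hsec : ∀ s, T.indicator (fun p => F p.1 * H p.2) (t, s) =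
        (Iic t).indicator (fun s => F t * H s) s := fun s => by simp [T, indicator_apply]
    simp_rw [hsec]
    rw [integral_indicator measurableSet_Iic, Measure.restrict_restrict measurableSet_Iic,
      Iic_inter_Ioc_of_le ht.2, integral_const_mul, intervalIntegral.integral_of_le ht.1.le]
  have hupper : ∫ p in Tᶜ, F p.1 * H p.2 ∂(μ.prod μ) =
      ∫ t in (0:ℝ)..X, (∫ s in (0:ℝ)..t, F s) * H t := by
    rw [← integral_indicator hT.compl, integral_prod_symm _ (hK.indicator hT.compl),
      intervalIntegral.integral_of_le hX]
    refine setIntegral_congr_fun measurableSet_Ioc fun t ht => ?_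
    have hsec : ∀ s, Tᶜ.indicator (fun p => F p.1 * H p.2) (s, t) =
        (Iio t).indicator (fun s => F s * H t) s := fun s => by simp [T, indicator_apply]
    have hIoo : Iio t ∩ Ioc 0 X = Ioo 0 t := by
      ext s
      simp only [mem_inter_iff, mem_Iio, mem_Ioc, mem_Ioo]
      grind
    simp_rw [hsec]
    rw [integral_indicator measurableSet_Iio, Measure.restrict_restrict measurableSet_Iio, hIoo,
      integral_mul_const, ← integral_Ioc_eq_integral_Ioo, intervalIntegral.integral_of_le ht.1.le]
  rw [intervalIntegral.integral_of_le hX, intervalIntegral.integral_of_le hX, ← integral_prod_mul,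
    ← integral_add_compl hT hK, hlower, hupper]

lemma continuousOn_primitive_Icc_zero {E : Type*} [NormedAddCommGroup E] [NormedSpace ℝ E]
    {a : ℝ → E} {X : ℝ} (hX : 0 ≤ X) (ha : IntegrableOn a (Ioc 0 X)) :
    ContinuousOn (fun t => ∫ s in (0:ℝ)..t, a s) (Icc 0 X) := by
  have ha' : IntervalIntegrable a volume 0 X :=
    (intervalIntegrable_iff_integrableOn_Ioc_of_le hX).2 ha
  simpa [uIcc_of_le hX] using intervalIntegral.continuousOn_primitive_interval' ha' left_mem_uIcc

lemma mul_eq_add_integral_of_eq_add_integral {𝕜 : Type*} [RCLike 𝕜] {u v a b : ℝ → 𝕜}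
    {u₀ v₀ : 𝕜} {X : ℝ} (hX : 0 ≤ X) (ha : IntegrableOn a (Ioc 0 X))
    (hb : IntegrableOn b (Ioc 0 X)) (hu : ∀ t ∈ Icc 0 X, u t = u₀ + ∫ s in (0:ℝ)..t, a s)
    (hv : ∀ t ∈ Icc 0 X, v t = v₀ + ∫ s in (0:ℝ)..t, b s) :
    u X * v X = u₀ * v₀ + ∫ t in (0:ℝ)..X, (a t * v t + u t * b t) := by
  set A := fun t => ∫ s in (0:ℝ)..t, a s
  set B := fun t => ∫ s in (0:ℝ)..t, b s
  have haB : IntegrableOn (fun t => a t * B t) (Ioc 0 X) :=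
    ha.mul_continuousOn_of_subset (continuousOn_primitive_Icc_zero hX hb) measurableSet_Ioc
      isCompact_Icc Ioc_subset_Icc_self
  have hAb : IntegrableOn (fun t => A t * b t) (Ioc 0 X) :=
    hb.continuousOn_mul_of_subset (continuousOn_primitive_Icc_zero hX ha) isCompact_Icc
      measurableSet_Ioc Ioc_subset_Icc_self
  have hsplit : ∫ t in (0:ℝ)..X, (a t * v t + u t * b t) =
      ∫ t in (0:ℝ)..X, ((v₀ * a t + u₀ * b t) + (a t * B t + A t * b t)) := by
    refine intervalIntegral.integral_congr fun t ht => ?_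
    rw [uIcc_of_le hX] at ht
    simp only [hu t ht, hv t ht, A, B]
    ring
  have iv : ∀ {g : ℝ → 𝕜}, IntegrableOn g (Ioc 0 X) → IntervalIntegrable g volume 0 X :=
    (intervalIntegrable_iff_integrableOn_Ioc_of_le hX).2
  rw [hsplit, intervalIntegral.integral_add ((iv ha).const_mul _ |>.add ((iv hb).const_mul _))
      ((iv haB).add (iv hAb)),
    intervalIntegral.integral_add ((iv ha).const_mul _) ((iv hb).const_mul _),
    intervalIntegral.integral_add (iv haB) (iv hAb), intervalIntegral.integral_const_mul,
    intervalIntegral.integral_const_mul, ← integral_mul_integral hX ha hb,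
    hu X ⟨hX, le_rfl⟩, hv X ⟨hX, le_rfl⟩]
  ring

lemma primitive_pow_succ {𝕜 : Type*} [RCLike 𝕜] {g : ℝ → 𝕜} {X : ℝ} (hX : 0 ≤ X)
    (hg : IntegrableOn g (Ioc 0 X)) (n : ℕ) :
    (∫ s in (0:ℝ)..X, g s) ^ (n + 1) =
      (n + 1) * ∫ t in (0:ℝ)..X, g t * (∫ s in (0:ℝ)..t, g s) ^ n := by
  induction n generalizing X with
  | zero => simp
  | succ n ih =>
    have hb : IntegrableOn (fun t => (n + 1 : 𝕜) * (g t * (∫ s in (0:ℝ)..t, g s) ^ n))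
        (Ioc 0 X) :=
      (hg.mul_continuousOn_of_subset ((continuousOn_primitive_Icc_zero hX hg).pow n)
        measurableSet_Ioc isCompact_Icc Ioc_subset_Icc_self).const_mul _
    have hpow := mul_eq_add_integral_of_eq_add_integral (u₀ := 0) (v₀ := 0) hX hg hb
      (u := fun t => ∫ s in (0:ℝ)..t, g s) (v := fun t => (∫ s in (0:ℝ)..t, g s) ^ (n + 1))
      (fun t _ => (zero_add _).symm) fun t ht => by
        rw [ih ht.1 (hg.mono_set (Ioc_subset_Ioc_right ht.2)), zero_add,
          intervalIntegral.integral_const_mul]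
    rw [pow_succ', hpow, zero_mul, zero_add, ← intervalIntegral.integral_const_mul]
    refine intervalIntegral.integral_congr fun t _ => ?_
    push_cast
    ring

lemma nonpos_of_le_integral_mul {g ψ : ℝ → ℝ} {X : ℝ} (hX : 0 ≤ X)
    (hg : IntegrableOn g (Ioc 0 X)) (hg0 : ∀ t ∈ Icc 0 X, 0 ≤ g t)
    (hψ : ContinuousOn ψ (Icc 0 X)) (hle : ∀ t ∈ Icc 0 X, ψ t ≤ ∫ s in (0:ℝ)..t, g s * ψ s) :
    ∀ t ∈ Icc 0 X, ψ t ≤ 0 := by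
  obtain ⟨M, hM⟩ := isCompact_Icc.exists_bound_of_continuousOn hψ
  set Φ := fun t => ∫ s in (0:ℝ)..t, g s
  have hΦ : ContinuousOn Φ (Icc 0 X) := continuousOn_primitive_Icc_zero hX hg
  have hbound : ∀ n : ℕ, ∀ t ∈ Icc 0 X, ψ t ≤ M * (Φ t ^ n / n.factorial) := by
    intro n
    induction n with
    | zero =>
      intro t ht
      simpa using (le_abs_self _).trans (hM t ht)
    | succ n ih =>
      intro t ht
      have hsub : Icc 0 t ⊆ Icc 0 X := Icc_subset_Icc_right ht.2
      have hgt : IntegrableOn g (Ioc 0 t) := hg.mono_set (Ioc_subset_Ioc_right ht.2)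
      have hint : ∀ {φ : ℝ → ℝ}, ContinuousOn φ (Icc 0 X) →
          IntervalIntegrable (fun s => g s * φ s) volume 0 t := fun hφ =>
        (intervalIntegrable_iff_integrableOn_Ioc_of_le ht.1).2 <| hgt.mul_continuousOn_of_subset
          (hφ.mono hsub) measurableSet_Ioc isCompact_Icc Ioc_subset_Icc_self
      calc ψ t ≤ ∫ s in (0:ℝ)..t, g s * ψ s := hle t ht
        _ ≤ ∫ s in (0:ℝ)..t, g s * (M * (Φ s ^ n / n.factorial)) :=
          intervalIntegral.integral_mono_on ht.1 (hint hψ)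
            (hint (continuousOn_const.mul ((hΦ.pow n).div_const _))) fun s hs =>
              mul_le_mul_of_nonneg_left (ih s (hsub hs)) (hg0 s (hsub hs))
        _ = M * (Φ t ^ (n + 1) / (n + 1).factorial) := by
          have hpull : ∫ s in (0:ℝ)..t, g s * (M * (Φ s ^ n / n.factorial)) =
              M / n.factorial * ∫ s in (0:ℝ)..t, g s * Φ s ^ n := by
            rw [← intervalIntegral.integral_const_mul]
            exact intervalIntegral.integral_congr fun s _ => by ring
          rw [hpull, primitive_pow_succ ht.1 hgt, Nat.factorial_succ]
          push_cast
          field_simp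
          rfl
  intro t ht
  have hlim : Filter.Tendsto (fun n : ℕ => M * (Φ t ^ n / n.factorial)) Filter.atTop
      (nhds 0) := by
    simpa using (FloorSemiring.tendsto_pow_div_factorial_atTop (Φ t)).const_mul M
  exact ge_of_tendsto' hlim fun n => hbound n t ht

open ComplexConjugate Matrix

section Potential

variable {f : ℝ → ℂ} {t : ℝ}

lemma norm_WmatOf_apply_le (i k : Fin 2) : ‖WmatOf f t i k‖ ≤ ‖f t‖ := by
  fin_cases i <;> fin_cases k <;> simp [WmatOf]

lemma WmatOf_mul_submatrix_rev_map_conj (M : Matrix (Fin 2) (Fin 2) ℂ) (i j : Fin 2) :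
    (WmatOf f t * (M.submatrix Fin.rev Fin.rev).map conj) i j =
      conj ((WmatOf f t * M) i.rev j.rev) := by
  fin_cases i <;> simp [WmatOf, mul_apply, Fin.sum_univ_two, Fin.rev]

lemma integrableOn_WmatOf_mul_apply {G : ℝ → Matrix (Fin 2) (Fin 2) ℂ} {X : ℝ}
    (hf : IntegrableOn f (Ioc 0 X)) (hG : ContinuousOn G (Icc 0 X)) (i j : Fin 2) :
    IntegrableOn (fun t => (WmatOf f t * G t) i j) (Ioc 0 X) := by
  have hf' : IntegrableOn (fun t => conj (f t)) (Ioc 0 X) :=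
    Complex.conjLIE.integrable_comp_iff.2 hf
  have hW : ∀ k, IntegrableOn (fun t => WmatOf f t i k) (Ioc 0 X) := by
    intro k
    fin_cases i <;> fin_cases k <;> simp [WmatOf, hf, hf']
  simp only [mul_apply]
  exact integrable_finsetSum _ fun k _ => (hW k).mul_continuousOn_of_subset
    ((continuous_id.matrix_elem k j).comp_continuousOn hG) measurableSet_Ioc isCompact_Icc
    Ioc_subset_Icc_self

end Potential

lemma MeasureTheory.LocallyIntegrableOn.integrableOn_Ioc_of_Ici {E : Type*}
    [NormedAddCommGroup E] {g : ℝ → E} {a b : ℝ} (hg : LocallyIntegrableOn g (Ici a)) :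
    IntegrableOn g (Ioc a b) :=
  (hg.integrableOn_compact_subset Icc_subset_Ici_self isCompact_Icc).mono_set Ioc_subset_Icc_self

section SupNorm

attribute [local instance] Matrix.normedAddCommGroup

variable {f : ℝ → ℂ}

lemma norm_WmatOf_mul_apply_le (t : ℝ) (M : Matrix (Fin 2) (Fin 2) ℂ) (i j : Fin 2) :
    ‖(WmatOf f t * M) i j‖ ≤ 2 * ‖f t‖ * ‖M‖ := by
  have hterm : ∀ k, ‖WmatOf f t i k * M k j‖ ≤ ‖f t‖ * ‖M‖ := fun k => by
    rw [norm_mul]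
    exact mul_le_mul (norm_WmatOf_apply_le i k) (norm_entry_le_entrywise_sup_norm M)
      (norm_nonneg _) (norm_nonneg _)
  calc ‖(WmatOf f t * M) i j‖ ≤ ‖WmatOf f t i 0 * M 0 j‖ + ‖WmatOf f t i 1 * M 1 j‖ := by
        rw [mul_apply, Fin.sum_univ_two]; exact norm_add_le _ _
    _ ≤ 2 * ‖f t‖ * ‖M‖ := by linarith [hterm 0, hterm 1]

lemma eq_zero_of_eq_integral_WmatOf_mul {D : ℝ → Matrix (Fin 2) (Fin 2) ℂ} {X : ℝ}
    (hX : 0 ≤ X) (hf : IntegrableOn f (Ioc 0 X)) (hD : ContinuousOn D (Icc 0 X))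
    (hDeq : ∀ t ∈ Icc 0 X, ∀ i j, D t i j = ∫ s in (0:ℝ)..t, (WmatOf f s * D s) i j) :
    D X = 0 := by
  have hle : ∀ t ∈ Icc 0 X, ‖D t‖ ≤ ∫ s in (0:ℝ)..t, 2 * ‖f s‖ * ‖D s‖ := by
    intro t ht
    have hsub : Icc 0 t ⊆ Icc 0 X := Icc_subset_Icc_right ht.2
    have hft : IntegrableOn f (Ioc 0 t) := hf.mono_set (Ioc_subset_Ioc_right ht.2)
    have iv : ∀ {φ : ℝ → ℝ}, IntegrableOn φ (Ioc 0 t) → IntervalIntegrable φ volume 0 t :=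
      (intervalIntegrable_iff_integrableOn_Ioc_of_le ht.1).2
    refine (norm_le_iff (intervalIntegral.integral_nonneg ht.1 fun s _ => by positivity)).2
      fun i j => ?_
    rw [hDeq t ht i j]
    refine (intervalIntegral.norm_integral_le_integral_norm ht.1).trans
      (intervalIntegral.integral_mono_on ht.1
        (iv (integrableOn_WmatOf_mul_apply hft (hD.mono hsub) i j).norm)
        (iv (IntegrableOn.mul_continuousOn_of_subset (hft.norm.const_mul 2) (hD.norm.mono hsub)
          measurableSet_Ioc isCompact_Icc Ioc_subset_Icc_self))
        fun s _ => norm_WmatOf_mul_apply_le s (D s) i j)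
  have h := nonpos_of_le_integral_mul hX (hf.norm.const_mul 2) (fun t _ => by positivity)
    hD.norm hle X ⟨hX, le_rfl⟩
  exact norm_le_zero_iff.1 h

end SupNorm

namespace IsSolutionOf

variable {f : ℝ → ℂ} {G H : ℝ → Matrix (Fin 2) (Fin 2) ℂ}

theorem unique (hf : LocallyIntegrableOn f (Ici 0)) (hG : IsSolutionOf f G) (hH : IsSolutionOf f H)
    {x : ℝ} (hx : 0 ≤ x) : G x = H x := by
  have hfx : IntegrableOn f (Ioc 0 x) := hf.integrableOn_Ioc_of_Ici
  have hGc : ContinuousOn G (Icc 0 x) := hG.1.mono Icc_subset_Ici_self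
  have hHc : ContinuousOn H (Icc 0 x) := hH.1.mono Icc_subset_Ici_self
  refine sub_eq_zero.1 (eq_zero_of_eq_integral_WmatOf_mul hx hfx (hGc.sub hHc) fun t ht i j => ?_)
  have hft : IntegrableOn f (Ioc 0 t) := hfx.mono_set (Ioc_subset_Ioc_right ht.2)
  have iv : ∀ {M : ℝ → Matrix (Fin 2) (Fin 2) ℂ}, ContinuousOn M (Icc 0 x) →
      IntervalIntegrable (fun s => (WmatOf f s * M s) i j) volume 0 t := fun hM =>
    (intervalIntegrable_iff_integrableOn_Ioc_of_le ht.1).2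
      (integrableOn_WmatOf_mul_apply hft (hM.mono (Icc_subset_Icc_right ht.2)) i j)
  simp only [Pi.sub_apply, Matrix.mul_sub, Matrix.sub_apply]
  rw [intervalIntegral.integral_sub (iv hGc) (iv hHc), hG.2 t ht.1, hH.2 t ht.1]
  ring

theorem submatrix_rev_map_conj (hG : IsSolutionOf f G) :
    IsSolutionOf f fun t => ((G t).submatrix Fin.rev Fin.rev).map conj := by
  refine ⟨((continuous_id.matrix_submatrix _ _).matrix_map Complex.continuous_conj
    ).comp_continuousOn hG.1, fun x hx i j => ?_⟩
  simp only [WmatOf_mul_submatrix_rev_map_conj, map_apply, submatrix_apply,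
    intervalIntegral.intervalIntegral_conj]
  rw [hG.2 x hx, map_add]
  simp [one_apply]

theorem det_eq_one (hf : LocallyIntegrableOn f (Ici 0)) (hG : IsSolutionOf f G) {x : ℝ}
    (hx : 0 ≤ x) : (G x).det = 1 := by
  have hint : ∀ i j, IntegrableOn (fun t => (WmatOf f t * G t) i j) (Ioc 0 x) :=
    integrableOn_WmatOf_mul_apply hf.integrableOn_Ioc_of_Ici (hG.1.mono Icc_subset_Ici_self)
  have heq : ∀ i j, ∀ t ∈ Icc 0 x, G t i j = (1 : Matrix (Fin 2) (Fin 2) ℂ) i j +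
      ∫ s in (0:ℝ)..t, (WmatOf f s * G s) i j := fun i j t ht => hG.2 t ht.1 i j
  rw [det_fin_two,
    mul_eq_add_integral_of_eq_add_integral hx (hint 0 0) (hint 1 1) (heq 0 0) (heq 1 1),
    mul_eq_add_integral_of_eq_add_integral hx (hint 0 1) (hint 1 0) (heq 0 1) (heq 1 0)]
  simp only [one_apply_eq, one_apply_ne zero_ne_one, one_apply_ne one_ne_zero, mul_one, mul_zero,
    zero_add]
  rw [add_sub_assoc, add_eq_left, sub_eq_zero]
  -- the integrands differ by `tr W(t) * det G(t)` (Jacobi), and `W(t)` has zero diagonal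
  refine intervalIntegral.integral_congr fun t _ => ?_
  simp only [WmatOf, mul_apply, Fin.sum_univ_two, of_apply, cons_val', cons_val_zero, cons_val_one,
    empty_val', cons_val_fin_one]
  ring

end IsSolutionOf

theorem solution_is_SU11 (f : ℝ → ℂ)
    (hf : LocallyIntegrableOn f (Set.Ici 0))
    (G : ℝ → Matrix (Fin 2) (Fin 2) ℂ) (hG : IsSolutionOf f G) :
    ∀ x : ℝ, 0 ≤ x →
      G x 1 0 = (starRingEnd ℂ) (G x 0 1) ∧
      G x 1 1 = (starRingEnd ℂ) (G x 0 0) ∧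
      ‖G x 0 0‖ ^ 2 - ‖G x 0 1‖ ^ 2 = 1 ∧
      (G x).det = 1 ∧
      1 ≤ ‖G x 0 0‖ := by
  intro x hx
  have hflip := hG.unique hf hG.submatrix_rev_map_conj hx
  have h10 : G x 1 0 = conj (G x 0 1) := by simpa [Fin.rev] using congr_fun₂ hflip 1 0
  have h11 : G x 1 1 = conj (G x 0 0) := by simpa [Fin.rev] using congr_fun₂ hflip 1 1
  have hdet := hG.det_eq_one hf hx
  have hnorm : ‖G x 0 0‖ ^ 2 - ‖G x 0 1‖ ^ 2 = 1 := by
    have h := hdet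
    rw [det_fin_two, h10, h11, Complex.mul_conj', Complex.mul_conj'] at h
    exact_mod_cast h
  exact ⟨h10, h11, hnorm, hdet,
    (one_le_sq_iff₀ (norm_nonneg _)).1 (by linarith [sq_nonneg ‖G x 0 1‖])⟩
end

section
/- Let f : [0,∞) → ℂ be locally integrable and W(t) := [[0, f(t)], [conj(f(t)), 0]] ∈ M₂(ℂ). Let 0 ≤ u₀ < u₁ < ⋯ < u_n and put ω_j := [u_{j−1}, u_j) for j = 1,…,n and ω := [u₀, u_n). Let G₁,…,G_n, G : [0,∞) → M₂(ℂ) be continuous functions with G_j(x) = 1 + ∫₀ˣ 1_{ω_j}(t)·W(t)·G_j(t) dt and G(x) = 1 + ∫₀ˣ 1_{ω}(t)·W(t)·G(t) dt for all x ≥ 0. Then for every x ≥ 0, G(x) = G_n(x)·G_{n−1}(x)⋯G₂(x)·G₁(x) (matrix product in descending order of the index). -/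
/-!
A solution for the potential cut off to `[a, b)` equals `1` on `[0, a]` and is constant on
`[b, ∞)`. Hence if `P` solves the equation cut off to `[a, b)` and `Q` the one cut off to `[b, c)`,
then `Q P` solves it cut off to `[a, c)`: on `[0, b)` the factor `Q` is `1`, on `[b, ∞)` the factor
`P` is frozen at `P b`. By induction along the partition, `G_n ⋯ G_1` solves the equation cut off
to `ω`, and so does `G`. Solutions are unique: the difference `D` of two solutions satisfies
`‖D x‖ ≤ ‖D s‖ + ∫ₛˣ ‖W‖ ‖D‖`, and a Grönwall-type continuity argument forces `D = 0`.
-/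

open MeasureTheory Set

open Filter Topology intervalIntegral

theorem MeasureTheory.LocallyIntegrableOn.indicator {X E : Type*} [MeasurableSpace X]
    [TopologicalSpace X] [NormedAddCommGroup E] {μ : Measure X} {f : X → E} {s t : Set X}
    (hf : LocallyIntegrableOn f s μ) (ht : MeasurableSet t) :
    LocallyIntegrableOn (t.indicator f) s μ := fun x hx =>
  let ⟨U, hU, hfU⟩ := hf x hx
  ⟨U, hU, hfU.indicator ht⟩

theorem eqOn_zero_of_le_integral_mul_of_integral_lt_one {φ k : ℝ → ℝ} {a b : ℝ} (hab : a ≤ b)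
    (hφ : ContinuousOn φ (Icc a b)) (hφ0 : 0 ≤ φ) (hk : IntervalIntegrable k volume a b)
    (hk0 : 0 ≤ k) (hk1 : ∫ t in a..b, k t < 1)
    (h : ∀ x ∈ Icc a b, φ x ≤ ∫ t in a..x, k t * φ t) :
    EqOn φ 0 (Icc a b) := by
  obtain ⟨t₀, ⟨hat₀, ht₀b⟩, hmax⟩ := isCompact_Icc.exists_isMaxOn (nonempty_Icc.2 hab) hφ
  have hkt₀ : IntervalIntegrable k volume a t₀ :=
    hk.mono_set (uIcc_subset_uIcc_left (Icc_subset_uIcc ⟨hat₀, ht₀b⟩))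
  have hφt₀ : φ t₀ ≤ (∫ t in a..b, k t) * φ t₀ := calc
    φ t₀ ≤ ∫ t in a..t₀, k t * φ t := h t₀ ⟨hat₀, ht₀b⟩
    _ ≤ ∫ t in a..t₀, k t * φ t₀ := by
      refine integral_mono_on hat₀ (hkt₀.mul_continuousOn ?_) (hkt₀.mul_const _)
        fun t ht => mul_le_mul_of_nonneg_left (hmax ⟨ht.1, ht.2.trans ht₀b⟩) (hk0 t)
      exact hφ.mono (uIcc_of_le hat₀ ▸ Icc_subset_Icc_right ht₀b)
    _ = (∫ t in a..t₀, k t) * φ t₀ := integral_mul_const _ _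
    _ ≤ (∫ t in a..b, k t) * φ t₀ := mul_le_mul_of_nonneg_right
      (integral_mono_interval le_rfl hat₀ ht₀b (Eventually.of_forall hk0) hk) (hφ0 t₀)
  have hφt₀0 : φ t₀ ≤ 0 := by nlinarith [hφ0 t₀]
  exact fun y hy => le_antisymm ((hmax hy).trans hφt₀0) (hφ0 y)

theorem eqOn_zero_of_le_add_integral_mul {φ k : ℝ → ℝ} {a b : ℝ}
    (hφ : ContinuousOn φ (Icc a b)) (hφ0 : 0 ≤ φ) (hk : IntervalIntegrable k volume a b)
    (hk0 : 0 ≤ k) (ha : φ a = 0)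
    (h : ∀ s ∈ Icc a b, ∀ x ∈ Icc s b, φ x ≤ φ s + ∫ t in s..x, k t * φ t) :
    EqOn φ 0 (Icc a b) := by
  have hclosed : IsClosed ({z | φ z = 0} ∩ Icc a b) := by
    rw [inter_comm]
    exact hφ.preimage_isClosed_of_isClosed isClosed_Icc isClosed_singleton
  refine hclosed.Icc_subset_of_forall_mem_nhdsWithin ha fun z ⟨(hz : φ z = 0), hza, hzb⟩ => ?_
  have hIcc : Icc a b ⊆ uIcc a b := Icc_subset_uIcc
  have hsmall : ∀ᶠ w in 𝓝[>] z, ∫ t in z..w, k t < 1 := by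
    have hzmem : z ∈ uIcc a b := hIcc ⟨hza, hzb.le⟩
    have hcont := (continuousOn_primitive_interval' hk hzmem z hzmem).tendsto
    rw [integral_same] at hcont
    have hnhds : 𝓝[>] z ≤ 𝓝[uIcc a b] z :=
      nhdsWithin_le_of_mem (mem_of_superset (Ico_mem_nhdsGT hzb)
        fun t ht => hIcc ⟨hza.trans ht.1, ht.2.le⟩)
    exact (hcont.mono_left hnhds).eventually (Iio_mem_nhds one_pos)
  obtain ⟨w, hkw, hzw, hwb⟩ := (hsmall.and (Ioc_mem_nhdsGT hzb)).exists
  have hzwab : Icc z w ⊆ Icc a b := Icc_subset_Icc hza hwb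
  have hzero := eqOn_zero_of_le_integral_mul_of_integral_lt_one hzw.le (hφ.mono hzwab) hφ0
    (hk.mono_set (uIcc_of_le hzw.le ▸ hzwab.trans hIcc)) hk0 hkw
    fun x hx => by simpa [hz] using h z ⟨hza, hzb.le⟩ x ⟨hx.1, hx.2.trans hwb⟩
  exact mem_of_superset (Icc_mem_nhdsGT hzw) hzero

theorem MeasureTheory.LocallyIntegrableOn.intervalIntegrable_mul {A : Type*} [NormedRing A]
    {W G : ℝ → A} (hW : LocallyIntegrableOn W (Ici 0)) (hG : ContinuousOn G (Ici 0)) {s x : ℝ}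
    (hs : 0 ≤ s) (hx : 0 ≤ x) : IntervalIntegrable (fun t => W t * G t) volume s x := by
  have hsub : uIcc s x ⊆ Ici 0 := fun t ht => (le_min hs hx).trans ht.1
  exact (hW.integrableOn_compact_subset hsub isCompact_uIcc).intervalIntegrable.mul_continuousOn
    (hG.mono hsub)

variable {A : Type*} [NormedRing A] [NormedAlgebra ℝ A]

def IsIntegralSolution (W G : ℝ → A) : Prop :=
  ContinuousOn G (Ici 0) ∧ ∀ x, 0 ≤ x → G x = 1 + ∫ t in 0..x, W t * G t

namespace IsIntegralSolution

variable {W G P Q : ℝ → A} {b x : ℝ}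

theorem sub_eq_integral (hW : LocallyIntegrableOn W (Ici 0)) (hG : IsIntegralSolution W G)
    {s : ℝ} (hs : 0 ≤ s) (hx : 0 ≤ x) : G x - G s = ∫ t in s..x, W t * G t := by
  rw [hG.2 x hx, hG.2 s hs, add_sub_add_left_eq_sub,
    integral_interval_sub_left (hW.intervalIntegrable_mul hG.1 le_rfl hx)
      (hW.intervalIntegrable_mul hG.1 le_rfl hs)]

theorem eq_one_of_le (hG : IsIntegralSolution W G) (hW0 : ∀ t < b, W t = 0) (hx : 0 ≤ x)
    (hxb : x ≤ b) : G x = 1 := by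
  rw [hG.2 x hx, integral_of_le hx, integral_Ioc_eq_integral_Ioo,
    setIntegral_eq_zero_of_forall_eq_zero fun t ht => by rw [hW0 t (ht.2.trans_le hxb), zero_mul],
    add_zero]

theorem eq_of_ge (hW : LocallyIntegrableOn W (Ici 0)) (hG : IsIntegralSolution W G)
    (hW0 : ∀ t ≥ b, W t = 0) (hb : 0 ≤ b) (hbx : b ≤ x) : G x = G b := by
  rw [← sub_eq_zero, hG.sub_eq_integral hW hb (hb.trans hbx),
    integral_congr (g := fun _ => 0) fun t ht => by
      rw [uIcc_of_le hbx] at ht; simp [hW0 t ht.1], intervalIntegral.integral_zero]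

theorem eqOn (hW : LocallyIntegrableOn W (Ici 0)) (hP : IsIntegralSolution W P)
    (hQ : IsIntegralSolution W Q) : EqOn P Q (Ici 0) := by
  intro x (hx : 0 ≤ x)
  have hD : ContinuousOn (fun t => ‖P t - Q t‖) (Icc 0 x) :=
    (hP.1.sub hQ.1).norm.mono Icc_subset_Ici_self
  have hk : IntervalIntegrable (fun t => ‖W t‖) volume 0 x :=
    (hW.norm.integrableOn_compact_subset (uIcc_of_le hx ▸ Icc_subset_Ici_self)
      isCompact_uIcc).intervalIntegrable
  have hgronwall : ∀ s ∈ Icc 0 x, ∀ y ∈ Icc s x,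
      ‖P y - Q y‖ ≤ ‖P s - Q s‖ + ∫ t in s..y, ‖W t‖ * ‖P t - Q t‖ := by
    rintro s ⟨hs, -⟩ y ⟨hsy, -⟩
    have hy := hs.trans hsy
    have hdiff : P y - Q y = (P s - Q s) + ∫ t in s..y, W t * (P t - Q t) := by
      simp only [mul_sub]
      rw [integral_sub (hW.intervalIntegrable_mul hP.1 hs hy)
          (hW.intervalIntegrable_mul hQ.1 hs hy),
        ← hP.sub_eq_integral hW hs hy, ← hQ.sub_eq_integral hW hs hy]
      abel
    calc ‖P y - Q y‖ ≤ ‖P s - Q s‖ + ‖∫ t in s..y, W t * (P t - Q t)‖ :=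
          hdiff ▸ norm_add_le _ _
      _ ≤ ‖P s - Q s‖ + ∫ t in s..y, ‖W t‖ * ‖P t - Q t‖ :=
          add_le_add_right (norm_integral_le_of_norm_le hsy
            (Eventually.of_forall fun t _ => norm_mul_le _ _)
            (hW.norm.intervalIntegrable_mul (hP.1.sub hQ.1).norm hs hy)) _
  have hDx := eqOn_zero_of_le_add_integral_mul hD (fun t => norm_nonneg _) hk
    (fun t => norm_nonneg _) (by simp [hP.2 0 le_rfl, hQ.2 0 le_rfl]) hgronwall ⟨hx, le_rfl⟩
  exact sub_eq_zero.1 (norm_eq_zero.1 hDx)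

theorem mul_of_Ico [CompleteSpace A] {V : ℝ → A} {a c : ℝ}
    (hV : LocallyIntegrableOn V (Ici 0)) (hb : 0 ≤ b) (hab : a ≤ b) (hbc : b ≤ c)
    (hP : IsIntegralSolution ((Ico a b).indicator V) P)
    (hQ : IsIntegralSolution ((Ico b c).indicator V) Q) :
    IsIntegralSolution ((Ico a c).indicator V) (fun x => Q x * P x) := by
  have hQ_one : ∀ t, 0 ≤ t → t ≤ b → Q t = 1 := fun t ht htb =>
    hQ.eq_one_of_le (fun s hs => indicator_of_notMem (fun h => hs.not_ge h.1) _) ht htb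
  have hP_const : ∀ t, b ≤ t → P t = P b := fun t htb =>
    hP.eq_of_ge (hV.indicator measurableSet_Ico)
      (fun s hs => indicator_of_notMem (fun h => h.2.not_ge hs) _) hb htb
  -- on `[0, b)` only the first factor moves, on `[b, ∞)` only the second one
  have hsplit : ∀ t, 0 ≤ t → (Ico a c).indicator V t * (Q t * P t) =
      (Ico a b).indicator V t * P t + (Ico b c).indicator V t * Q t * P b := by
    intro t ht
    rw [← Ico_union_Ico_eq_Ico hab hbc, indicator_union_of_disjoint Ico_disjoint_Ico_same,
      add_mul]
    rcases lt_or_ge t b with htb | htb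
    · rw [hQ_one t ht htb.le, one_mul,
        indicator_of_notMem (fun h : t ∈ Ico b c => h.1.not_gt htb)]
      simp only [zero_mul]
    · rw [hP_const t htb, indicator_of_notMem (fun h : t ∈ Ico a b => h.2.not_ge htb),
        zero_mul, zero_mul, mul_assoc]
  refine ⟨hQ.1.mul hP.1, fun x hx => ?_⟩
  have hPint := (hV.indicator (measurableSet_Ico (a := a) (b := b))).intervalIntegrable_mul
    hP.1 le_rfl hx
  have hQint := (hV.indicator (measurableSet_Ico (a := b) (b := c))).intervalIntegrable_mul
    hQ.1 le_rfl hx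
  have hint : ∫ t in 0..x, (Ico a c).indicator V t * (Q t * P t) =
      (P x - 1) + (Q x - 1) * P b := by
    rw [integral_congr fun t ht => hsplit t (uIcc_of_le hx ▸ ht).1,
      integral_add hPint (hQint.mul_const _), hP.2 x hx, hQ.2 x hx, add_sub_cancel_left,
      add_sub_cancel_left]
    exact congrArg _ (((ContinuousLinearMap.mul ℝ A).flip (P b)).intervalIntegral_comp_comm hQint)
  show Q x * P x = 1 + ∫ t in 0..x, (Ico a c).indicator V t * (Q t * P t)
  rw [hint]
  rcases le_total x b with hxb | hbx
  · rw [hQ_one x hx hxb, sub_self, zero_mul, one_mul]; abel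
  · rw [hP_const x hbx]; noncomm_ring

end IsIntegralSolution

theorem isIntegralSolution_prod_ofFn [CompleteSpace A] {V : ℝ → A}
    (hV : LocallyIntegrableOn V (Ici 0)) {n : ℕ} {u : Fin (n + 1) → ℝ} (hu : Monotone u)
    (hu0 : 0 ≤ u 0) {G : Fin n → ℝ → A}
    (hG : ∀ j, IsIntegralSolution ((Ico (u j.castSucc) (u j.succ)).indicator V) (G j)) :
    IsIntegralSolution ((Ico (u 0) (u (Fin.last n))).indicator V)
      (fun x => (List.ofFn fun j => G j x).reverse.prod) := by
  induction n with
  | zero => simp [IsIntegralSolution, continuousOn_const]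
  | succ n ih =>
    have hprod : ∀ x, (List.ofFn fun j => G j x).reverse.prod =
        G (Fin.last n) x * (List.ofFn fun j => G j.castSucc x).reverse.prod := fun x => by
      rw [List.ofFn_succ', List.concat_eq_append, List.reverse_concat, List.prod_cons]
    simp only [hprod]
    exact (ih (hu.comp Fin.strictMono_castSucc.monotone) hu0 fun j => hG j.castSucc).mul_of_Ico
      hV (hu0.trans (hu (Fin.zero_le _))) (hu (Fin.zero_le _)) (hu (Fin.castSucc_le_succ _))
      (hG (Fin.last n))

section Matrix

-- `Matrix` carries the product topology and uniformity as global instances; removing them lets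
-- the `l∞`-operator norm supply both, so that the lemmas above apply to `2 × 2` matrices.
attribute [-instance] instTopologicalSpaceMatrix Matrix.instUniformSpace
attribute [local instance] Matrix.linftyOpNormedRing Matrix.linftyOpNormedAlgebra

theorem wmatOf_indicator (s : Set ℝ) (f : ℝ → ℂ) :
    WmatOf (s.indicator f) = s.indicator (WmatOf f) := by
  funext t
  by_cases ht : t ∈ s
  · simp [WmatOf, ht]
  · ext i j
    fin_cases i <;> fin_cases j <;> simp [WmatOf, ht]

theorem MeasureTheory.LocallyIntegrableOn.wmatOf {f : ℝ → ℂ} {s : Set ℝ}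
    (hf : LocallyIntegrableOn f s) : LocallyIntegrableOn (WmatOf f) s := by
  let L : ℂ →ₗ[ℝ] Matrix (Fin 2) (Fin 2) ℂ :=
    { toFun := fun z => !![0, z; starRingEnd ℂ z, 0]
      map_add' := fun z w => by ext i j; fin_cases i <;> fin_cases j <;> simp
      map_smul' := fun r z => by ext i j; fin_cases i <;> fin_cases j <;> simp }
  exact (LinearMap.toContinuousLinearMap L).locallyIntegrableOn_comp hf

theorem IsSolutionOf.isIntegralSolution {f : ℝ → ℂ} {G : ℝ → Matrix (Fin 2) (Fin 2) ℂ}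
    (hf : LocallyIntegrableOn f (Ici 0)) (hG : IsSolutionOf f G) :
    IsIntegralSolution (WmatOf f) G := by
  refine ⟨hG.1, fun x hx => Matrix.ext fun i j => ?_⟩
  rw [hG.2 x hx i j, Matrix.add_apply]
  congr 1
  exact (LinearMap.toContinuousLinearMap (Matrix.entryLinearMap ℝ ℂ i j)
    ).intervalIntegral_comp_comm (hf.wmatOf.intervalIntegrable_mul hG.1 le_rfl hx)

theorem partition_product (f : ℝ → ℂ)
    (hf : LocallyIntegrableOn f (Set.Ici 0))
    (n : ℕ) (u : Fin (n + 1) → ℝ) (hu : StrictMono u) (hu0 : 0 ≤ u 0)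
    (Gj : Fin n → ℝ → Matrix (Fin 2) (Fin 2) ℂ)
    (hGj : ∀ j : Fin n,
      IsSolutionOf (Set.indicator (Set.Ico (u j.castSucc) (u j.succ)) f) (Gj j))
    (G : ℝ → Matrix (Fin 2) (Fin 2) ℂ)
    (hG : IsSolutionOf (Set.indicator (Set.Ico (u 0) (u (Fin.last n))) f) G) :
    ∀ x : ℝ, 0 ≤ x →
      G x = (List.ofFn fun j : Fin n => Gj j x).reverse.prod := by
  have hsol : ∀ {a b} {H : ℝ → Matrix (Fin 2) (Fin 2) ℂ},
      IsSolutionOf ((Ico a b).indicator f) H →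
        IsIntegralSolution ((Ico a b).indicator (WmatOf f)) H := fun hH =>
    wmatOf_indicator _ f ▸ hH.isIntegralSolution (hf.indicator measurableSet_Ico)
  exact (hsol hG).eqOn (hf.wmatOf.indicator measurableSet_Ico)
    (isIntegralSolution_prod_ofFn hf.wmatOf hu.monotone hu0 fun j => hsol (hGj j))

end Matrix
end

section
/- Let d ≥ 2 be an integer, F ∈ L²([0,∞); ℂ), and let p = I × ω be a d-adic tile with I = [d^κ·n, d^κ·(n+1)) and ω = [d^{−κ}·l, d^{−κ}·(l+1)), where κ, n, l ∈ ℤ and n, l ≥ 0. Let k₀ := d^κ·n be the left endpoint of I and let k ∈ I. Let G_ω(k₀,·) and G_ω(k,·) be solutions of the d-adic scattering ODE with potential F·1_ω. Then there exists an integer j, depending on k but not on x, such that for every x ≥ 0, writing G_ω(k₀,x) = [[a, b], [conj(b), conj(a)]], one has G_ω(k,x) = [[a, γ^j·b], [conj(γ^j·b), conj(a)]]. In particular the upper-left entry of G_ω(k,x) equals that of G_ω(k₀,x) for all k ∈ I. -/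
/-!
For `k` in the tile interval `I`, the digits of `k` of index `≥ κ` are those of its left endpoint
`k₀`, and for `x ∈ ω` the digits of `x` of index `≥ -κ` are those of the left endpoint `x₀` of `ω`;
all other digits of `k₀` and of `x₀` vanish. Hence the exponent of `w(k, x)` splits as the
exponent of `w(k₀, x)` plus that of `w(k, x₀)`, so on `ω` the potential for `k` is the one for `k₀`
times the unimodular constant `g = w(k, x₀)`. In matrix form
`W(k, ·) = diag(1, ḡ) W(k₀, ·) diag(1, g)`, and conjugating `G_ω(k₀, ·)` the same way gives a
solution for `k`. Solutions of these Volterra equations are unique by a Grönwall argument, which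
identifies that conjugate with `G_ω(k, ·)`; the same uniqueness, applied to the entrywise conjugate
of `G_ω(k₀, ·)` with rows and columns swapped, gives its shape `[[a, b], [b̄, ā]]`.
-/

open MeasureTheory Set

/-- The `n`-th base-`d` digit of a nonnegative real `x`:  `⌊x·d^(−n)⌋ mod d`. -/
noncomputable def dDigit (d : ℕ) (x : ℝ) (n : ℤ) : ℕ :=
  (⌊x * (d : ℝ) ^ (-n)⌋ % d).toNat

/-- The character function `w(k,x) = γ^{∑_{n∈ℤ} kₙ·x_{−1−n}}`. -/
noncomputable def charFun (d : ℕ) (γ : ℂ) (k x : ℝ) : ℂ :=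
  γ ^ (∑ᶠ n : ℤ, dDigit d k n * dDigit d x (-1 - n))

/-- The matrix potential `W(k,x)`. -/
noncomputable def Wmat (d : ℕ) (γ : ℂ) (F : ℝ → ℂ) (k x : ℝ) :
    Matrix (Fin 2) (Fin 2) ℂ :=
  !![0, F x * charFun d γ k x;
     (starRingEnd ℂ) (F x * charFun d γ k x), 0]

/-- `G` is a solution of the `d`-adic scattering ODE with potential `F`
at spectral parameter `k`. -/
def IsSolution (d : ℕ) (γ : ℂ) (F : ℝ → ℂ) (k : ℝ)
    (G : ℝ → Matrix (Fin 2) (Fin 2) ℂ) : Prop :=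
  ContinuousOn G (Set.Ici 0) ∧
  ∀ x : ℝ, 0 ≤ x → ∀ i j : Fin 2,
    G x i j = (1 : Matrix (Fin 2) (Fin 2) ℂ) i j +
      ∫ t in (0:ℝ)..x, (Wmat d γ F k t * G t) i j

open Filter Topology

theorem eq_zero_on_Icc_of_le_integral_mul {f a : ℝ → ℝ} {x y : ℝ} (hxy : x ≤ y)
    (hf : ContinuousOn f (Icc x y)) (hf₀ : ∀ t, 0 ≤ f t) (ha₀ : ∀ t, 0 ≤ a t)
    (ha : IntervalIntegrable a volume x y) (ha_lt : ∫ t in x..y, a t < 1)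
    (hfa : ∀ t ∈ Icc x y, f t ≤ ∫ s in x..t, a s * f s) :
    ∀ t ∈ Icc x y, f t = 0 := by
  obtain ⟨ξ, hξ, hmax⟩ := isCompact_Icc.exists_isMaxOn (nonempty_Icc.2 hxy) hf
  have hsub : uIcc x ξ ⊆ uIcc x y := by
    rw [uIcc_of_le hξ.1, uIcc_of_le hxy]; exact Icc_subset_Icc_right hξ.2
  have hM : f ξ ≤ (∫ t in x..y, a t) * f ξ :=
    calc f ξ ≤ ∫ s in x..ξ, a s * f s := hfa ξ hξ
      _ ≤ ∫ s in x..ξ, a s * f ξ := by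
          refine intervalIntegral.integral_mono_on hξ.1
            ((ha.mono_set hsub).mul_continuousOn (hf.mono (by rwa [← uIcc_of_le hxy])))
            ((ha.mono_set hsub).mul_const _) fun s hs => ?_
          exact mul_le_mul_of_nonneg_left (hmax ⟨hs.1, hs.2.trans hξ.2⟩) (ha₀ s)
      _ = (∫ s in x..ξ, a s) * f ξ := intervalIntegral.integral_mul_const _ _
      _ ≤ (∫ t in x..y, a t) * f ξ := by
          gcongr
          · exact hf₀ ξ
          · exact intervalIntegral.integral_mono_interval le_rfl hξ.1 hξ.2
              (Eventually.of_forall ha₀) ha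
  have hξ0 : f ξ ≤ 0 := by nlinarith [hf₀ ξ]
  exact fun t ht => le_antisymm ((hmax ht).trans hξ0) (hf₀ t)

theorem integral_eq_zero_of_forall_mem_Ico {E : Type*} [NormedAddCommGroup E] [NormedSpace ℝ E]
    {g : ℝ → E} {a b : ℝ} (hab : a ≤ b) (hg : ∀ t ∈ Ico a b, g t = 0) :
    ∫ t in a..b, g t = 0 := by
  rw [intervalIntegral.integral_of_le hab, integral_Ioc_eq_integral_Ioo]
  exact setIntegral_eq_zero_of_forall_eq_zero fun t ht => hg t ⟨ht.1.le, ht.2⟩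

theorem eventually_forall_Ico_eq_zero_of_le_integral_mul {f a : ℝ → ℝ}
    (hf : ContinuousOn f (Ici 0)) (hf₀ : ∀ t, 0 ≤ f t) (ha₀ : ∀ t, 0 ≤ a t)
    (ha : ∀ x, 0 ≤ x → IntervalIntegrable a volume 0 x)
    (hfa : ∀ x, 0 ≤ x → f x ≤ ∫ t in (0 : ℝ)..x, a t * f t) {x : ℝ} (h0 : 0 ≤ x)
    (hx : ∀ t ∈ Ico 0 x, f t = 0) : ∀ᶠ y in 𝓝[>] x, ∀ t ∈ Ico 0 y, f t = 0 := by
  have haf : ∀ y, 0 ≤ y → IntervalIntegrable (fun t => a t * f t) volume 0 y := fun y hy =>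
    (ha y hy).mul_continuousOn (hf.mono (by rw [uIcc_of_le hy]; exact Icc_subset_Ici_self))
  have hx1 : x ≤ x + 1 := by linarith
  have htend : Tendsto (fun y => ∫ t in x..y, a t) (𝓝[>] x) (𝓝 0) := by
    have := intervalIntegral.continuousOn_primitive_interval'
      ((ha x h0).symm.trans (ha (x + 1) (by linarith))) left_mem_uIcc x left_mem_uIcc
    rw [uIcc_of_le hx1] at this
    simpa using this.tendsto.mono_left (nhdsWithin_le_of_mem (Icc_mem_nhdsGT (by linarith)))
  filter_upwards [htend (Iio_mem_nhds one_pos), self_mem_nhdsWithin]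
    with y (hy : ∫ t in x..y, a t < 1) (hxy : x < y)
  intro t ht
  rcases lt_or_ge t x with htx | hxt
  · exact hx t ⟨ht.1, htx⟩
  refine eq_zero_on_Icc_of_le_integral_mul hxy.le (hf.mono fun u hu => h0.trans hu.1) hf₀ ha₀
    ((ha x h0).symm.trans (ha y (h0.trans hxy.le))) hy (fun u hu => ?_) t ⟨hxt, ht.2.le⟩
  have hu₀ : 0 ≤ u := h0.trans hu.1
  calc f u ≤ ∫ t in (0 : ℝ)..u, a t * f t := hfa u hu₀
    _ = ∫ t in x..u, a t * f t := by
      rw [← intervalIntegral.integral_add_adjacent_intervals (haf x h0)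
          ((haf x h0).symm.trans (haf u hu₀)),
        integral_eq_zero_of_forall_mem_Ico h0 fun t ht => by rw [hx t ht, mul_zero], zero_add]

theorem eq_zero_of_le_integral_mul {f a : ℝ → ℝ} (hf : ContinuousOn f (Ici 0))
    (hf₀ : ∀ t, 0 ≤ f t) (ha₀ : ∀ t, 0 ≤ a t)
    (ha : ∀ x, 0 ≤ x → IntervalIntegrable a volume 0 x)
    (hfa : ∀ x, 0 ≤ x → f x ≤ ∫ t in (0 : ℝ)..x, a t * f t) :
    ∀ x, 0 ≤ x → f x = 0 := by
  set s : Set ℝ := {y | ∀ t ∈ Ico 0 y, f t = 0}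
  have hs_closed : IsClosed s := by
    have : s = ⋂ t ∈ {t | 0 ≤ t ∧ f t ≠ 0}, Iic t := by
      ext y
      simp only [s, mem_ofPred_eq, mem_Ico, mem_iInter, mem_Iic]
      exact ⟨fun h t ht => not_lt.1 fun hty => ht.2 (h t ⟨ht.1, hty⟩),
        fun h t ht => by_contra fun hne => (h t ⟨ht.1, hne⟩).not_gt ht.2⟩
    rw [this]
    exact isClosed_biInter fun _ _ => isClosed_Iic
  intro x hx
  have hsub := IsClosed.Icc_subset_of_forall_mem_nhdsWithin (hs_closed.inter isClosed_Icc)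
    (show (0 : ℝ) ∈ s from fun t ht => absurd ht.2 (not_lt.2 ht.1))
    (fun y hy => eventually_forall_Ico_eq_zero_of_le_integral_mul hf hf₀ ha₀ ha hfa hy.2.1 hy.1)
    (b := x)
  have hxs : ∀ t ∈ Ico 0 x, f t = 0 := hsub ⟨hx, le_rfl⟩
  refine le_antisymm ((hfa x hx).trans_eq ?_) (hf₀ x)
  exact integral_eq_zero_of_forall_mem_Ico hx fun t ht => by rw [hxs t ht, mul_zero]

section Volterra

variable {n : Type*} [Fintype n] {W G H : ℝ → Matrix n n ℂ}

-- the entrywise sup norm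
attribute [local instance] Matrix.normedAddCommGroup

theorem Matrix.norm_mul_apply_le (A B : Matrix n n ℂ) (i j : n) :
    ‖(A * B) i j‖ ≤ (∑ i, ∑ m, ‖A i m‖) * ‖B‖ :=
  calc ‖(A * B) i j‖ ≤ ∑ m, ‖A i m‖ * ‖B m j‖ := by
        rw [Matrix.mul_apply]
        exact (norm_sum_le _ _).trans (Finset.sum_le_sum fun m _ => norm_mul_le _ _)
    _ ≤ ∑ m, ‖A i m‖ * ‖B‖ := by
        gcongr; exact Matrix.norm_entry_le_entrywise_sup_norm _
    _ ≤ (∑ i, ∑ m, ‖A i m‖) * ‖B‖ := by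
        rw [← Finset.sum_mul]
        exact mul_le_mul_of_nonneg_right (Finset.single_le_sum (f := fun i => ∑ m, ‖A i m‖)
          (fun _ _ => by positivity) (Finset.mem_univ i)) (norm_nonneg _)

theorem intervalIntegrable_mul_apply
    (hW : ∀ i j x, 0 ≤ x → IntervalIntegrable (fun t => W t i j) volume 0 x)
    (hG : ContinuousOn G (Ici 0)) {x : ℝ} (hx : 0 ≤ x) (i j : n) :
    IntervalIntegrable (fun t => (W t * G t) i j) volume 0 x := by
  have hGx : ∀ m, ContinuousOn (fun t => G t m j) (uIcc 0 x) := fun m =>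
    (continuous_apply_apply m j).comp_continuousOn
      (hG.mono (by rw [uIcc_of_le hx]; exact Icc_subset_Ici_self))
  simpa only [Matrix.mul_apply, Finset.sum_fn] using
    IntervalIntegrable.sum Finset.univ fun m _ => (hW i m x hx).mul_continuousOn (hGx m)

variable [DecidableEq n]

def IsVolterraSolution (W G : ℝ → Matrix n n ℂ) : Prop :=
  ContinuousOn G (Ici 0) ∧ ∀ x : ℝ, 0 ≤ x → ∀ i j : n,
    G x i j = (1 : Matrix n n ℂ) i j + ∫ t in (0 : ℝ)..x, (W t * G t) i j

theorem IsVolterraSolution.sub_apply_eq_integral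
    (hW : ∀ i j x, 0 ≤ x → IntervalIntegrable (fun t => W t i j) volume 0 x)
    (hG : IsVolterraSolution W G) (hH : IsVolterraSolution W H) {x : ℝ} (hx : 0 ≤ x) (i j : n) :
    (G x - H x) i j = ∫ t in (0 : ℝ)..x, (W t * (G t - H t)) i j := by
  rw [Matrix.sub_apply, hG.2 x hx, hH.2 x hx, add_sub_add_left_eq_sub,
    ← intervalIntegral.integral_sub (intervalIntegrable_mul_apply hW hG.1 hx i j)
      (intervalIntegrable_mul_apply hW hH.1 hx i j)]
  simp only [Matrix.mul_sub, Matrix.sub_apply]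

theorem IsVolterraSolution.eqOn
    (hW : ∀ i j x, 0 ≤ x → IntervalIntegrable (fun t => W t i j) volume 0 x)
    (hG : IsVolterraSolution W G) (hH : IsVolterraSolution W H) : EqOn G H (Ici 0) := by
  set b : ℝ → ℝ := fun t => ∑ i, ∑ m, ‖W t i m‖
  have hb₀ : ∀ t, 0 ≤ b t := fun t => by positivity
  have hb : ∀ x, 0 ≤ x → IntervalIntegrable b volume 0 x := fun x hx => by
    simpa only [Finset.sum_fn] using IntervalIntegrable.sum Finset.univ fun i _ =>
      IntervalIntegrable.sum Finset.univ fun m _ => (hW i m x hx).norm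
  have hdiff : ContinuousOn (fun x => G x - H x) (Ici 0) := hG.1.sub hH.1
  have hgronwall : ∀ x, 0 ≤ x → ‖G x - H x‖ ≤ ∫ t in (0 : ℝ)..x, b t * ‖G t - H t‖ := by
    intro x hx
    refine (Matrix.norm_le_iff (intervalIntegral.integral_nonneg hx fun t _ =>
      mul_nonneg (hb₀ t) (norm_nonneg _))).2 fun i j => ?_
    rw [hG.sub_apply_eq_integral hW hH hx]
    refine (intervalIntegral.norm_integral_le_integral_norm hx).trans
      (intervalIntegral.integral_mono_on hx (intervalIntegrable_mul_apply hW hdiff hx i j).norm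
        ((hb x hx).mul_continuousOn ?_) fun t _ => Matrix.norm_mul_apply_le _ _ i j)
    exact hdiff.norm.mono (by rw [uIcc_of_le hx]; exact Icc_subset_Ici_self)
  have hzero := eq_zero_of_le_integral_mul hdiff.norm (fun _ => norm_nonneg _) hb₀ hb hgronwall
  exact fun x hx => sub_eq_zero.1 (norm_eq_zero.1 (hzero x hx))

theorem IsVolterraSolution.diagonal_mul_mul_diagonal {u v : n → ℂ} (hvu : ∀ i, v i * u i = 1)
    (hG : IsVolterraSolution W G) :
    IsVolterraSolution (fun t => Matrix.diagonal u * W t * Matrix.diagonal v)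
      (fun x => Matrix.diagonal u * G x * Matrix.diagonal v) := by
  have hdiag : Matrix.diagonal v * Matrix.diagonal u = 1 := by
    rw [Matrix.diagonal_mul_diagonal, ← Matrix.diagonal_one]
    exact congrArg Matrix.diagonal (funext hvu)
  have hprod : ∀ t, Matrix.diagonal u * W t * Matrix.diagonal v *
      (Matrix.diagonal u * G t * Matrix.diagonal v) =
        Matrix.diagonal u * (W t * G t) * Matrix.diagonal v := fun t => by
    simp only [mul_assoc]
    rw [← mul_assoc (Matrix.diagonal v), hdiag, one_mul]
  refine ⟨(continuousOn_const.mul hG.1).mul continuousOn_const, fun x hx i j => ?_⟩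
  have hone : u i * (1 : Matrix n n ℂ) i j * v j = (1 : Matrix n n ℂ) i j := by
    rcases eq_or_ne i j with rfl | hij
    · rw [Matrix.one_apply_eq, mul_one, mul_comm, hvu]
    · rw [Matrix.one_apply_ne hij, mul_zero, zero_mul]
  simp only [hprod, Matrix.mul_diagonal, Matrix.diagonal_mul, hG.2 x hx i j,
    intervalIntegral.integral_mul_const, intervalIntegral.integral_const_mul]
  rw [mul_add, add_mul, hone]

theorem IsVolterraSolution.map_conj_submatrix (e : n ≃ n)
    (hW : ∀ t i j, starRingEnd ℂ (W t (e i) (e j)) = W t i j) (hG : IsVolterraSolution W G) :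
    IsVolterraSolution W (fun x => ((G x).submatrix e e).map (starRingEnd ℂ)) := by
  have hcont : Continuous fun M : Matrix n n ℂ => (M.submatrix e e).map (starRingEnd ℂ) :=
    (continuous_id.matrix_submatrix e e).matrix_map Complex.continuous_conj
  refine ⟨hcont.comp_continuousOn hG.1, fun x hx i j => ?_⟩
  have hone : starRingEnd ℂ ((1 : Matrix n n ℂ) (e i) (e j)) = (1 : Matrix n n ℂ) i j := by
    simp [Matrix.one_apply, e.injective.eq_iff]
  have hmul : ∀ t, starRingEnd ℂ ((W t * G t) (e i) (e j)) =
      (W t * ((G t).submatrix e e).map (starRingEnd ℂ)) i j := fun t => by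
    simp only [Matrix.mul_apply, map_sum, map_mul, Matrix.map_apply, Matrix.submatrix_apply]
    rw [← e.sum_comp]
    simp only [hW]
  simp only [Matrix.map_apply, Matrix.submatrix_apply]
  rw [hG.2 x hx, map_add, hone, ← intervalIntegral.intervalIntegral_conj]
  simp only [hmul]

end Volterra

section Digits

variable {d : ℕ}

theorem dDigit_eq_zero_of_lt (hd : 0 < d) {m : ℤ} {y : ℝ} (hy₀ : 0 ≤ y) (hy : y < (d : ℝ) ^ m) :
    dDigit d y m = 0 := by
  have hpos : (0 : ℝ) < (d : ℝ) ^ m := zpow_pos (by exact_mod_cast hd) m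
  have : ⌊y * (d : ℝ) ^ (-m)⌋ = 0 := by
    rw [Int.floor_eq_zero_iff, zpow_neg, ← div_eq_mul_inv]
    exact ⟨div_nonneg hy₀ hpos.le, (div_lt_one hpos).2 hy⟩
  rw [dDigit, this]
  rfl

theorem floor_mul_zpow_neg_eq_of_mem_Ico (hd : 0 < d) {κ a : ℤ} {x : ℝ}
    (hx : x ∈ Ico ((d : ℝ) ^ κ * a) ((d : ℝ) ^ κ * (a + 1))) : ⌊x * (d : ℝ) ^ (-κ)⌋ = a := by
  have hpos : (0 : ℝ) < (d : ℝ) ^ κ := zpow_pos (by exact_mod_cast hd) κ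
  rw [Int.floor_eq_iff, zpow_neg, ← div_eq_mul_inv, le_div_iff₀ hpos, div_lt_iff₀ hpos,
    mul_comm _ ((d : ℝ) ^ κ), mul_comm _ ((d : ℝ) ^ κ)]
  exact hx

theorem floor_mul_zpow_neg_eq_floor_div (hd : 0 < d) {κ m : ℤ} (hm : κ ≤ m) (x : ℝ) :
    ⌊x * (d : ℝ) ^ (-m)⌋ = ⌊x * (d : ℝ) ^ (-κ)⌋ / ((d ^ (m - κ).toNat : ℕ) : ℤ) := by
  have hd' : (d : ℝ) ≠ 0 := by exact_mod_cast hd.ne'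
  rw [← Int.floor_div_natCast]
  congr 1
  push_cast
  rw [← zpow_natCast, Int.toNat_of_nonneg (sub_nonneg.2 hm), mul_div_assoc, ← zpow_sub₀ hd']
  ring_nf

theorem dDigit_eq_of_floor_eq (hd : 0 < d) {κ m : ℤ} (hm : κ ≤ m) {x y : ℝ}
    (h : ⌊x * (d : ℝ) ^ (-κ)⌋ = ⌊y * (d : ℝ) ^ (-κ)⌋) : dDigit d x m = dDigit d y m := by
  simp only [dDigit, floor_mul_zpow_neg_eq_floor_div hd hm, h]

theorem dDigit_zpow_mul_eq_zero (hd : 0 < d) {κ m : ℤ} (hm : m < κ) (a : ℤ) :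
    dDigit d ((d : ℝ) ^ κ * a) m = 0 := by
  have hd' : (d : ℝ) ≠ 0 := by exact_mod_cast hd.ne'
  have : (d : ℝ) ^ κ * a * (d : ℝ) ^ (-m) = ((a * d ^ (κ - m).toNat : ℤ) : ℝ) := by
    push_cast
    rw [← zpow_natCast, Int.toNat_of_nonneg (by omega), zpow_sub₀ hd', zpow_neg]
    ring
  have hdvd : (d : ℤ) ∣ a * d ^ (κ - m).toNat :=
    (dvd_pow_self _ (by omega)).mul_left a
  rw [dDigit, this, Int.floor_intCast, Int.emod_eq_zero_of_dvd hdvd]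
  rfl

theorem support_dDigit_mul_subset (hd : 1 < d) {k x : ℝ} {K X : ℕ} (hk : 0 ≤ k) (hx : 0 ≤ x)
    (hkK : k < (d : ℝ) ^ K) (hxX : x < (d : ℝ) ^ X) :
    (Function.support fun m : ℤ => dDigit d k m * dDigit d x (-1 - m)) ⊆ Icc (-X - 1 : ℤ) K := by
  have hd₁ : (1 : ℝ) ≤ d := by exact_mod_cast hd.le
  intro m hm
  rw [Function.mem_support] at hm
  by_contra hout
  apply hm
  rcases not_and_or.1 hout with hlow | hhigh
  · rw [dDigit_eq_zero_of_lt (by omega) hx (hxX.trans_le ?_), mul_zero]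
    rw [← zpow_natCast]
    exact zpow_le_zpow_right₀ hd₁ (by omega)
  · rw [dDigit_eq_zero_of_lt (by omega) hk (hkK.trans_le ?_), zero_mul]
    rw [← zpow_natCast]
    exact zpow_le_zpow_right₀ hd₁ (by omega)

theorem finite_support_dDigit_mul (hd : 1 < d) {k x : ℝ} (hk : 0 ≤ k) (hx : 0 ≤ x) :
    (Function.support fun m : ℤ => dDigit d k m * dDigit d x (-1 - m)).Finite := by
  have hd₁ : (1 : ℝ) < d := by exact_mod_cast hd
  obtain ⟨K, hK⟩ := pow_unbounded_of_one_lt k hd₁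
  obtain ⟨X, hX⟩ := pow_unbounded_of_one_lt x hd₁
  exact (finite_Icc _ _).subset (support_dDigit_mul_subset hd hk hx hK hX)

theorem charFun_eq_mul_of_mem_tile (hd : 1 < d) (γ : ℂ) {κ n l : ℤ} (hn : 0 ≤ n) (hl : 0 ≤ l)
    {k x : ℝ} (hk : k ∈ Ico ((d : ℝ) ^ κ * n) ((d : ℝ) ^ κ * (n + 1)))
    (hx : x ∈ Ico ((d : ℝ) ^ (-κ) * l) ((d : ℝ) ^ (-κ) * (l + 1))) :
    charFun d γ k x =
      charFun d γ ((d : ℝ) ^ κ * n) x * charFun d γ k ((d : ℝ) ^ (-κ) * l) := by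
  have hd₀ : 0 < d := by omega
  have hdR : (0 : ℝ) < d := by exact_mod_cast hd₀
  set k₀ := (d : ℝ) ^ κ * n
  set x₀ := (d : ℝ) ^ (-κ) * l
  have hk₀ : k₀ ∈ Ico ((d : ℝ) ^ κ * n) ((d : ℝ) ^ κ * (n + 1)) :=
    ⟨le_rfl, mul_lt_mul_of_pos_left (by linarith) (zpow_pos hdR κ)⟩
  have hx₀ : x₀ ∈ Ico ((d : ℝ) ^ (-κ) * l) ((d : ℝ) ^ (-κ) * (l + 1)) :=
    ⟨le_rfl, mul_lt_mul_of_pos_left (by linarith) (zpow_pos hdR (-κ))⟩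
  have hk₀_nonneg : 0 ≤ k₀ := mul_nonneg (zpow_pos hdR κ).le (by exact_mod_cast hn)
  have hx₀_nonneg : 0 ≤ x₀ := mul_nonneg (zpow_pos hdR (-κ)).le (by exact_mod_cast hl)
  -- positions `m ≥ κ` contribute only to the first sum, positions `m < κ` only to the second
  have hterm : ∀ m : ℤ, dDigit d k m * dDigit d x (-1 - m) =
      dDigit d k₀ m * dDigit d x (-1 - m) + dDigit d k m * dDigit d x₀ (-1 - m) := by
    intro m
    rcases le_or_gt κ m with hm | hm
    · rw [dDigit_eq_of_floor_eq hd₀ hm ((floor_mul_zpow_neg_eq_of_mem_Ico hd₀ hk).trans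
        (floor_mul_zpow_neg_eq_of_mem_Ico hd₀ hk₀).symm),
        dDigit_zpow_mul_eq_zero hd₀ (by omega : -1 - m < -κ), mul_zero, add_zero]
    · rw [dDigit_zpow_mul_eq_zero hd₀ hm, dDigit_eq_of_floor_eq hd₀ (by omega : -κ ≤ -1 - m)
        ((floor_mul_zpow_neg_eq_of_mem_Ico hd₀ hx).trans
          (floor_mul_zpow_neg_eq_of_mem_Ico hd₀ hx₀).symm), zero_mul, zero_add]
  have hx_nonneg : 0 ≤ x := hx₀_nonneg.trans hx.1
  have hk_nonneg : 0 ≤ k := hk₀_nonneg.trans hk.1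
  simp only [_root_.charFun, ← pow_add]
  rw [finsum_congr hterm, finsum_add_distrib (finite_support_dDigit_mul hd hk₀_nonneg hx_nonneg)
    (finite_support_dDigit_mul hd hk_nonneg hx₀_nonneg)]

end Digits

section Potential

variable {d : ℕ} {γ : ℂ}

theorem measurable_dDigit (d : ℕ) (m : ℤ) : Measurable fun x : ℝ => dDigit d x m :=
  (measurable_of_countable fun z : ℤ => (z % (d : ℤ)).toNat).comp
    (measurable_id.mul_const _).floor

theorem norm_charFun (hγ : ‖γ‖ = 1) (k x : ℝ) : ‖charFun d γ k x‖ = 1 := by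
  rw [_root_.charFun, norm_pow, hγ, one_pow]

theorem aestronglyMeasurable_charFun (hd : 1 < d) (γ : ℂ) {k : ℝ} (hk : 0 ≤ k) (x : ℝ) :
    AEStronglyMeasurable (fun t => charFun d γ k t) (volume.restrict (Icc 0 x)) := by
  have hd₁ : (1 : ℝ) < d := by exact_mod_cast hd
  obtain ⟨K, hK⟩ := pow_unbounded_of_one_lt k hd₁
  obtain ⟨X, hX⟩ := pow_unbounded_of_one_lt x hd₁
  -- on `[0, x]` the exponent is a sum over the fixed finite range of positions `[-X-1, K]`
  have hmeas : Measurable fun t : ℝ =>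
      γ ^ (∑ m ∈ Finset.Icc (-X - 1 : ℤ) K, dDigit d k m * dDigit d t (-1 - m)) :=
    (measurable_of_countable _).comp (Finset.measurable_sum _ fun m _ =>
      (measurable_of_countable _).comp (measurable_dDigit d (-1 - m)))
  refine hmeas.aestronglyMeasurable.congr ?_
  filter_upwards [ae_restrict_mem measurableSet_Icc] with t ht
  rw [_root_.charFun, finsum_eq_sum_of_support_subset _ (by
    rw [Finset.coe_Icc]; exact support_dDigit_mul_subset hd hk ht.1 hK (ht.2.trans_lt hX))]

theorem IntervalIntegrable.mul_charFun (hd : 1 < d) (hγ : ‖γ‖ = 1) {F : ℝ → ℂ} {k x : ℝ}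
    (hk : 0 ≤ k) (hx : 0 ≤ x) (hF : IntervalIntegrable F volume 0 x) :
    IntervalIntegrable (fun t => F t * charFun d γ k t) volume 0 x := by
  rw [intervalIntegrable_iff_integrableOn_Icc_of_le hx] at hF ⊢
  refine hF.norm.mono' (hF.aestronglyMeasurable.mul (aestronglyMeasurable_charFun hd γ hk x)) ?_
  exact Eventually.of_forall fun t => by rw [norm_mul, norm_charFun hγ, mul_one]

theorem IntervalIntegrable.conj {f : ℝ → ℂ} {a b : ℝ} {μ : Measure ℝ}
    (hf : IntervalIntegrable f μ a b) : IntervalIntegrable (fun t => starRingEnd ℂ (f t)) μ a b :=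
  ⟨Complex.conjCLE.toContinuousLinearMap.integrable_comp hf.1,
    Complex.conjCLE.toContinuousLinearMap.integrable_comp hf.2⟩

theorem MeasureTheory.MemLp.intervalIntegrable_of_restrict_Ici {E : Type*} [NormedAddCommGroup E]
    {p : ENNReal} (hp : 1 ≤ p) {F : ℝ → E} (hF : MemLp F p (volume.restrict (Ici 0))) {x : ℝ}
    (hx : 0 ≤ x) : IntervalIntegrable F volume 0 x := by
  have h := hF.restrict (Icc 0 x)
  rw [Measure.restrict_restrict measurableSet_Icc, inter_eq_left.2 Icc_subset_Ici_self] at h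
  exact (intervalIntegrable_iff_integrableOn_Icc_of_le hx).2 (h.integrable hp)

theorem intervalIntegrable_Wmat_apply (hd : 1 < d) (hγ : ‖γ‖ = 1) {F : ℝ → ℂ}
    (hF : ∀ x, 0 ≤ x → IntervalIntegrable F volume 0 x) {k : ℝ} (hk : 0 ≤ k) (i j : Fin 2)
    (x : ℝ) (hx : 0 ≤ x) : IntervalIntegrable (fun t => Wmat d γ F k t i j) volume 0 x := by
  have h := (hF x hx).mul_charFun hd hγ hk hx
  fin_cases i <;> fin_cases j
  exacts [intervalIntegrable_const, h, h.conj, intervalIntegrable_const]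

theorem isSolution_iff {F : ℝ → ℂ} {k : ℝ} {G : ℝ → Matrix (Fin 2) (Fin 2) ℂ} :
    IsSolution d γ F k G ↔ IsVolterraSolution (Wmat d γ F k) G :=
  Iff.rfl

theorem conj_Wmat_swap (d : ℕ) (γ : ℂ) (F : ℝ → ℂ) (k t : ℝ) (i j : Fin 2) :
    starRingEnd ℂ (Wmat d γ F k t (Equiv.swap 0 1 i) (Equiv.swap 0 1 j)) = Wmat d γ F k t i j := by
  fin_cases i <;> fin_cases j <;> simp [Wmat]

theorem Wmat_eq_diagonal_mul_mul_diagonal {F : ℝ → ℂ} {k k₀ t : ℝ} {g : ℂ}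
    (h : F t * charFun d γ k t = g * (F t * charFun d γ k₀ t)) :
    Wmat d γ F k t =
      Matrix.diagonal ![1, starRingEnd ℂ g] * Wmat d γ F k₀ t * Matrix.diagonal ![1, g] := by
  ext i j
  fin_cases i <;> fin_cases j <;> simp [Wmat, h, mul_comm]

theorem indicator_mul_charFun_eq_of_mem_tile (hd : 1 < d) (γ : ℂ) (F : ℝ → ℂ) {κ n l : ℤ}
    (hn : 0 ≤ n) (hl : 0 ≤ l) {k : ℝ} (hk : k ∈ Ico ((d : ℝ) ^ κ * n) ((d : ℝ) ^ κ * (n + 1)))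
    (t : ℝ) :
    (Ico ((d : ℝ) ^ (-κ) * l) ((d : ℝ) ^ (-κ) * (l + 1))).indicator F t * charFun d γ k t =
      charFun d γ k ((d : ℝ) ^ (-κ) * l) *
        ((Ico ((d : ℝ) ^ (-κ) * l) ((d : ℝ) ^ (-κ) * (l + 1))).indicator F t *
          charFun d γ ((d : ℝ) ^ κ * n) t) := by
  by_cases ht : t ∈ Ico ((d : ℝ) ^ (-κ) * l) ((d : ℝ) ^ (-κ) * (l + 1))
  · rw [charFun_eq_mul_of_mem_tile hd γ hn hl hk ht]
    ring
  · rw [indicator_of_notMem ht, zero_mul, zero_mul, mul_zero]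

end Potential

theorem tile_phase_constancy (d : ℕ) (hd : 2 ≤ d) (γ : ℂ) (hγ : IsPrimitiveRoot γ d)
    (F : ℝ → ℂ) (hF : MemLp F 2 (volume.restrict (Set.Ici 0)))
    (κ n l : ℤ) (hn : 0 ≤ n) (hl : 0 ≤ l)
    (k : ℝ) (hk : k ∈ Set.Ico ((d : ℝ) ^ κ * n) ((d : ℝ) ^ κ * (n + 1)))
    (G₀ G : ℝ → Matrix (Fin 2) (Fin 2) ℂ)
    (hG₀ : IsSolution d γ
      (Set.indicator (Set.Ico ((d : ℝ) ^ (-κ) * l) ((d : ℝ) ^ (-κ) * (l + 1))) F)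
      ((d : ℝ) ^ κ * n) G₀)
    (hG : IsSolution d γ
      (Set.indicator (Set.Ico ((d : ℝ) ^ (-κ) * l) ((d : ℝ) ^ (-κ) * (l + 1))) F)
      k G) :
    ∃ j : ℤ, ∀ x : ℝ, 0 ≤ x →
      G x = !![G₀ x 0 0, γ ^ j * G₀ x 0 1;
               (starRingEnd ℂ) (γ ^ j * G₀ x 0 1), (starRingEnd ℂ) (G₀ x 0 0)] := by
  rw [isSolution_iff] at hG₀ hG
  have hγ₁ : ‖γ‖ = 1 := hγ.norm'_eq_one (by omega)
  have hk₀ : 0 ≤ (d : ℝ) ^ κ * n := mul_nonneg (by positivity) (by exact_mod_cast hn)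
  set F' := (Ico ((d : ℝ) ^ (-κ) * l) ((d : ℝ) ^ (-κ) * (l + 1))).indicator F
  have hF' : ∀ x, 0 ≤ x → IntervalIntegrable F' volume 0 x := fun _ hx =>
    (hF.indicator measurableSet_Ico).intervalIntegrable_of_restrict_Ici one_le_two hx
  set g := charFun d γ k ((d : ℝ) ^ (-κ) * l)
  have hsym := hG₀.eqOn (intervalIntegrable_Wmat_apply hd hγ₁ hF' hk₀)
    (hG₀.map_conj_submatrix (Equiv.swap 0 1) (conj_Wmat_swap _ _ _ _))
  have hg : g * starRingEnd ℂ g = 1 := by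
    rw [Complex.mul_conj', norm_charFun hγ₁, Complex.ofReal_one, one_pow]
  have hvu : ∀ i, ![1, g] i * ![1, starRingEnd ℂ g] i = 1 := Fin.forall_fin_two.2 ⟨mul_one 1, hg⟩
  have hgauge := hG.eqOn (intervalIntegrable_Wmat_apply hd hγ₁ hF' (hk₀.trans hk.1)) (by
    convert hG₀.diagonal_mul_mul_diagonal hvu using 2 with t
    exact Wmat_eq_diagonal_mul_mul_diagonal
      (indicator_mul_charFun_eq_of_mem_tile hd γ F hn hl hk t))
  refine ⟨(∑ᶠ m : ℤ, dDigit d k m * dDigit d ((d : ℝ) ^ (-κ) * l) (-1 - m) : ℕ), fun x hx => ?_⟩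
  rw [zpow_natCast, show γ ^ _ = g from rfl, hgauge hx]
  have h10 := congrFun (congrFun (hsym hx) 1) 0
  have h11 := congrFun (congrFun (hsym hx) 1) 1
  ext i j
  fin_cases i <;> fin_cases j <;> simp [h10, h11, mul_comm]
  rw [← mul_assoc, hg, one_mul]
end

section
/- For all 2×2 complex matrices A and B of SU(1,1) form, log ‖A·B‖ + log ‖A·B^{−*}‖ ≤ 2·log ‖A‖ + 2·log ‖B‖, where B^{−*} := (B^{−1})* is the conjugate transpose of the inverse of B. -/
open Matrix

/-- A 2×2 complex matrix is of SU(1,1) form. -/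
def SU11 (M : Matrix (Fin 2) (Fin 2) ℂ) : Prop :=
  ∃ a b : ℂ, M = !![a, b; (starRingEnd ℂ) b, (starRingEnd ℂ) a] ∧
    ‖a‖ ^ 2 - ‖b‖ ^ 2 = 1

/-- The Hilbert–Schmidt size `sqrt(|M₁₁|² + |M₁₂|²)` of a matrix of SU(1,1) form. -/
noncomputable def hsNorm (M : Matrix (Fin 2) (Fin 2) ℂ) : ℝ :=
  Real.sqrt (‖M 0 0‖ ^ 2 + ‖M 0 1‖ ^ 2)

/-!
Write `A = [[a, b], [b̄, ā]]` and `B = [[c, d], [d̄, c̄]]`. Then `B^{-*} = [[c, -d], [-d̄, c̄]]`, so the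
first rows of `A·B` and `A·B^{-*}` are `(ac + b d̄, ad + b c̄)` and `(ac - b d̄, -ad + b c̄)`. By the
parallelogram law, `‖A·B‖² + ‖A·B^{-*}‖² = 2 ‖A‖² ‖B‖²`, and AM–GM turns this into
`‖A·B‖ ‖A·B^{-*}‖ ≤ ‖A‖² ‖B‖²`. Both products are again of SU(1,1) form, so all sizes are at
least `1` and taking logarithms is legitimate.
-/

theorem Real.log_add_log_le_two_mul_log_of_sq_add_sq {x y z : ℝ} (hx : 0 < x) (hy : 0 < y)
    (h : x ^ 2 + y ^ 2 = 2 * z ^ 2) : Real.log x + Real.log y ≤ 2 * Real.log z := by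
  have hxy : x * y ≤ z ^ 2 := by nlinarith [sq_nonneg (x - y)]
  calc Real.log x + Real.log y = Real.log (x * y) := (Real.log_mul hx.ne' hy.ne').symm
    _ ≤ Real.log (z ^ 2) := Real.log_le_log (mul_pos hx hy) hxy
    _ = 2 * Real.log z := by rw [Real.log_pow, Nat.cast_ofNat]

open ComplexConjugate

def su11Matrix (a b : ℂ) : Matrix (Fin 2) (Fin 2) ℂ :=
  !![a, b; conj b, conj a]

theorem su11Matrix_mul_su11Matrix (a b c d : ℂ) :
    su11Matrix a b * su11Matrix c d = su11Matrix (a * c + b * conj d) (a * d + b * conj c) := by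
  simp only [su11Matrix, mul_fin_two, map_add, map_mul, Complex.conj_conj]
  congr 1; ring_nf

theorem inv_su11Matrix {c d : ℂ} (h : ‖c‖ ^ 2 - ‖d‖ ^ 2 = 1) :
    (su11Matrix c d)⁻¹ = su11Matrix (conj c) (-d) := by
  have hdet : c * conj c - d * conj d = 1 := by
    simp only [Complex.mul_conj, ← Complex.sq_norm]
    exact_mod_cast h
  apply inv_eq_right_inv
  rw [su11Matrix_mul_su11Matrix, map_neg, Complex.conj_conj, mul_neg, ← sub_eq_add_neg, hdet,
    mul_neg, mul_comm d, neg_add_cancel, Matrix.one_fin_two]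
  simp [su11Matrix]

theorem conjTranspose_su11Matrix (a b : ℂ) : (su11Matrix a b)ᴴ = su11Matrix (conj a) b := by
  ext i j
  fin_cases i <;> fin_cases j <;> simp [su11Matrix]

theorem norm_sq_sub_norm_sq_mul (a b c d : ℂ) :
    ‖a * c + b * conj d‖ ^ 2 - ‖a * d + b * conj c‖ ^ 2 =
      (‖a‖ ^ 2 - ‖b‖ ^ 2) * (‖c‖ ^ 2 - ‖d‖ ^ 2) := by
  apply Complex.ofReal_injective
  push_cast [Complex.sq_norm, ← Complex.mul_conj]
  simp only [map_add, map_mul, Complex.conj_conj]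
  ring

theorem sq_hsNorm_su11Matrix (a b : ℂ) : hsNorm (su11Matrix a b) ^ 2 = ‖a‖ ^ 2 + ‖b‖ ^ 2 := by
  rw [hsNorm, Real.sq_sqrt (by positivity)]
  rfl

theorem sq_hsNorm_mul_add_sq_hsNorm_mul_neg (a b c d : ℂ) :
    hsNorm (su11Matrix a b * su11Matrix c d) ^ 2 +
        hsNorm (su11Matrix a b * su11Matrix c (-d)) ^ 2 =
      2 * (hsNorm (su11Matrix a b) * hsNorm (su11Matrix c d)) ^ 2 := by
  simp only [su11Matrix_mul_su11Matrix, mul_pow, sq_hsNorm_su11Matrix, map_neg, mul_neg]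
  have h₁ := parallelogram_law_with_norm ℂ (a * c) (b * conj d)
  have h₂ := parallelogram_law_with_norm ℂ (b * conj c) (a * d)
  rw [← sub_eq_add_neg, neg_add_eq_sub, add_comm (a * d)]
  simp only [norm_mul, RCLike.norm_conj] at h₁ h₂
  linear_combination h₁ + h₂

theorem su11_su11Matrix_mul {a b c d : ℂ} (hab : ‖a‖ ^ 2 - ‖b‖ ^ 2 = 1)
    (hcd : ‖c‖ ^ 2 - ‖d‖ ^ 2 = 1) : SU11 (su11Matrix a b * su11Matrix c d) := by
  rw [su11Matrix_mul_su11Matrix]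
  exact ⟨_, _, rfl, by rw [norm_sq_sub_norm_sq_mul, hab, hcd, one_mul]⟩

namespace SU11

theorem exists_eq_su11Matrix {M : Matrix (Fin 2) (Fin 2) ℂ} (hM : SU11 M) :
    ∃ a b : ℂ, M = su11Matrix a b ∧ ‖a‖ ^ 2 - ‖b‖ ^ 2 = 1 :=
  hM

theorem one_le_hsNorm {M : Matrix (Fin 2) (Fin 2) ℂ} (hM : SU11 M) : 1 ≤ hsNorm M := by
  obtain ⟨a, b, rfl, hab⟩ := hM.exists_eq_su11Matrix
  rw [hsNorm, Real.one_le_sqrt]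
  change 1 ≤ ‖a‖ ^ 2 + ‖b‖ ^ 2
  nlinarith [norm_nonneg b]

end SU11

theorem swapping_hs_log (A B : Matrix (Fin 2) (Fin 2) ℂ)
    (hA : SU11 A) (hB : SU11 B) :
    Real.log (hsNorm (A * B)) + Real.log (hsNorm (A * (B⁻¹)ᴴ)) ≤
      2 * Real.log (hsNorm A) + 2 * Real.log (hsNorm B) := by
  obtain ⟨a, b, rfl, hab⟩ := hA.exists_eq_su11Matrix
  obtain ⟨c, d, rfl, hcd⟩ := hB.exists_eq_su11Matrix
  have hcd' : ‖c‖ ^ 2 - ‖-d‖ ^ 2 = 1 := by rwa [norm_neg]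
  rw [inv_su11Matrix hcd, conjTranspose_su11Matrix, Complex.conj_conj]
  have hA₁ := hA.one_le_hsNorm
  have hB₁ := hB.one_le_hsNorm
  calc _ ≤ 2 * Real.log (hsNorm (su11Matrix a b) * hsNorm (su11Matrix c d)) :=
        Real.log_add_log_le_two_mul_log_of_sq_add_sq
          (one_pos.trans_le (su11_su11Matrix_mul hab hcd).one_le_hsNorm)
          (one_pos.trans_le (su11_su11Matrix_mul hab hcd').one_le_hsNorm)
          (sq_hsNorm_mul_add_sq_hsNorm_mul_neg a b c d)
    _ = _ := by rw [Real.log_mul (one_pos.trans_le hA₁).ne' (one_pos.trans_le hB₁).ne', mul_add]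
end

section
/- Let d ≥ 2 be an integer and let β be the swapping function associated to d. Then there exists a constant C > 0, depending only on d, such that for all a, b ∈ ℂ with |a|² = 1 + |b|², one has C^{−1}·log|a| ≤ β(b) ≤ C·log|a|. -/
/-! With `t = ‖b‖` the hypothesis gives `log ‖a‖ = log √(1 + t²)`, which is comparable to `t²`
for `t ≤ 1`. Every root of `r² − r³ = ε¹⁰ + ε²⁰ arsinh r` has `r² ≥ ε¹⁰`, and the intermediate
value theorem produces one in `(0, 1/2]`, so `ε⁵ ≤ r ≤ 1/2`. Below `r`, `β = t² − t³` is
comparable to `t²`. Above `r`, `arsinh t` exceeds `log √(1 + t²)` by at most `log 2`, and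
`log √(1 + t²) ≥ ε¹⁰ / 4` absorbs both the additive `ε¹⁰` and `ε²⁰ log 2`; hence `β` lies between
`ε²⁰ log ‖a‖` and `9 log ‖a‖`. -/

/-- `ε := 10⁻³·d⁻¹`. -/
noncomputable def swapEps (d : ℕ) : ℝ := (10 : ℝ) ^ (-3 : ℤ) * (d : ℝ)⁻¹

/-- The smallest positive real `r` with `r² − r³ = ε¹⁰ + ε²⁰·arsinh r`. -/
noncomputable def swapR (d : ℕ) : ℝ :=
  sInf {r : ℝ | 0 < r ∧
    r ^ 2 - r ^ 3 = swapEps d ^ 10 + swapEps d ^ 20 * Real.arsinh r}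

/-- The swapping function `β` associated to `d`. -/
noncomputable def swapBeta (d : ℕ) (z : ℂ) : ℝ :=
  if ‖z‖ ≤ swapR d then ‖z‖ ^ 2 - ‖z‖ ^ 3
  else swapEps d ^ 10 + swapEps d ^ 20 * Real.arsinh (‖z‖)

open Real

namespace Real

lemma arsinh_le_self {x : ℝ} (hx : 0 ≤ x) : arsinh x ≤ x := by
  simpa only [sinh_arsinh] using self_le_sinh_iff.mpr (arsinh_nonneg_iff.mpr hx)

lemma log_sqrt_one_add_sq_le_arsinh {x : ℝ} (hx : 0 ≤ x) : log √(1 + x ^ 2) ≤ arsinh x := by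
  rw [log_le_iff_le_exp (sqrt_pos.mpr (by positivity)), exp_arsinh]
  linarith

lemma arsinh_le_log_two_add_log_sqrt_one_add_sq (x : ℝ) :
    arsinh x ≤ log 2 + log √(1 + x ^ 2) := by
  have hs : 0 < √(1 + x ^ 2) := sqrt_pos.mpr (by positivity)
  rw [← log_mul two_ne_zero hs.ne', le_log_iff_exp_le (by positivity), exp_arsinh]
  linarith [le_abs_self x, abs_le_sqrt (by linarith : x ^ 2 ≤ 1 + x ^ 2)]

lemma log_one_add_le_self {x : ℝ} (hx : -1 < x) : log (1 + x) ≤ x := by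
  linarith [log_le_sub_one_of_pos (by linarith : 0 < 1 + x)]

lemma half_le_log_one_add {x : ℝ} (hx₀ : 0 ≤ x) (hx₁ : x ≤ 1) : x / 2 ≤ log (1 + x) := by
  refine le_trans ?_ (le_log_one_add_of_nonneg hx₀)
  rw [le_div_iff₀ (by linarith)]
  nlinarith

end Real

lemma log_sqrt_one_add_sq_nonneg (t : ℝ) : 0 ≤ log √(1 + t ^ 2) :=
  log_nonneg (one_le_sqrt.mpr (by nlinarith))

lemma log_sqrt_one_add_sq_mem_Icc {t : ℝ} (ht : t ^ 2 ≤ 1) :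
    t ^ 2 / 4 ≤ log √(1 + t ^ 2) ∧ log √(1 + t ^ 2) ≤ t ^ 2 / 2 := by
  rw [log_sqrt (by positivity)]
  have hlow := half_le_log_one_add (sq_nonneg t) ht
  have hupp := log_one_add_le_self (by nlinarith : -1 < t ^ 2)
  constructor <;> linarith

lemma sq_sub_cube_comparable_log_sqrt {t : ℝ} (ht₀ : 0 ≤ t) (ht : t ≤ 1 / 2) :
    log √(1 + t ^ 2) ≤ t ^ 2 - t ^ 3 ∧ t ^ 2 - t ^ 3 ≤ 4 * log √(1 + t ^ 2) := by
  obtain ⟨hlow, hupp⟩ := log_sqrt_one_add_sq_mem_Icc (by nlinarith : t ^ 2 ≤ 1)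
  have hcube : t ^ 3 ≤ t ^ 2 / 2 := by nlinarith [sq_nonneg t]
  have hcube₀ : 0 ≤ t ^ 3 := by positivity
  constructor <;> linarith

lemma pow_add_arsinh_comparable_log_sqrt {ε t : ℝ} (hε₀ : 0 ≤ ε) (hε₁ : ε ≤ 1)
    (ht : ε ^ 5 ≤ t) :
    ε ^ 20 * log √(1 + t ^ 2) ≤ ε ^ 10 + ε ^ 20 * arsinh t ∧
      ε ^ 10 + ε ^ 20 * arsinh t ≤ 9 * log √(1 + t ^ 2) := by
  have ht₀ : 0 ≤ t := (pow_nonneg hε₀ 5).trans ht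
  have hε20 : ε ^ 20 ≤ ε ^ 10 := pow_le_pow_of_le_one hε₀ hε₁ (by norm_num)
  have hε10 : ε ^ 10 ≤ 1 := pow_le_one₀ hε₀ hε₁
  have hℓ₀ := log_sqrt_one_add_sq_nonneg t
  have hlog2 : log 2 ≤ 1 := by linarith [log_le_sub_one_of_pos (by norm_num : (0 : ℝ) < 2)]
  have hℓ : ε ^ 10 / 4 ≤ log √(1 + t ^ 2) := by
    have hsq : (ε ^ 5) ^ 2 = ε ^ 10 := by ring
    have hmono : log √(1 + (ε ^ 5) ^ 2) ≤ log √(1 + t ^ 2) :=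
      log_le_log (sqrt_pos.mpr (by positivity))
        (sqrt_le_sqrt (by nlinarith [pow_nonneg hε₀ 5]))
    have hlow := (log_sqrt_one_add_sq_mem_Icc (hsq ▸ hε10)).1
    rw [hsq] at hlow hmono
    linarith
  have harsinh_low := log_sqrt_one_add_sq_le_arsinh ht₀
  have harsinh_upp := arsinh_le_log_two_add_log_sqrt_one_add_sq t
  constructor
  · nlinarith [pow_nonneg hε₀ 10, pow_nonneg hε₀ 20]
  · nlinarith [pow_nonneg hε₀ 20]

lemma pow_five_le_of_sq_sub_cube_eq {ε r : ℝ} (hr : 0 ≤ r)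
    (h : r ^ 2 - r ^ 3 = ε ^ 10 + ε ^ 20 * arsinh r) : ε ^ 5 ≤ r := by
  have harsinh : 0 ≤ ε ^ 20 * arsinh r := mul_nonneg (by positivity) (arsinh_nonneg_iff.mpr hr)
  have hsq : (ε ^ 5) ^ 2 ≤ r ^ 2 := by nlinarith [pow_nonneg hr 3]
  exact (le_abs_self _).trans (abs_le_of_sq_le_sq hsq hr)

lemma exists_sq_sub_cube_eq {ε : ℝ} (hε₀ : 0 < ε) (hε₁ : ε ≤ 1 / 2) :
    ∃ r ∈ Set.Ioc (0 : ℝ) (1 / 2), r ^ 2 - r ^ 3 = ε ^ 10 + ε ^ 20 * arsinh r := by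
  set f : ℝ → ℝ := fun r => r ^ 2 - r ^ 3 - (ε ^ 10 + ε ^ 20 * arsinh r) with hf_def
  have hf : ContinuousOn f (Set.Icc 0 (1 / 2)) := by fun_prop
  have hf₀ : f 0 < 0 := by
    simp only [hf_def, arsinh_zero]
    linarith [pow_pos hε₀ 10]
  have hf_half : 0 ≤ f (1 / 2) := by
    have harsinh : arsinh (1 / 2) ≤ 1 / 2 := arsinh_le_self (by norm_num)
    have hε10 : ε ^ 10 ≤ (1 / 2) ^ 10 := pow_le_pow_left₀ hε₀.le hε₁ 10
    have hε20 : ε ^ 20 ≤ (1 / 2) ^ 20 := pow_le_pow_left₀ hε₀.le hε₁ 20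
    have hprod : ε ^ 20 * arsinh (1 / 2) ≤ (1 / 2) ^ 20 * (1 / 2) :=
      mul_le_mul hε20 harsinh (arsinh_nonneg_iff.mpr (by norm_num)) (by norm_num)
    simp only [hf_def]
    norm_num at hε10 hprod ⊢
    linarith
  obtain ⟨r, hr, hfr⟩ := intermediate_value_Icc (by norm_num) hf ⟨hf₀.le, hf_half⟩
  refine ⟨r, ⟨hr.1.lt_of_ne ?_, hr.2⟩, by simp only [hf_def] at hfr; linarith⟩
  rintro rfl
  exact hf₀.ne hfr

lemma swapEps_pos {d : ℕ} (hd : 0 < d) : 0 < swapEps d := by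
  unfold swapEps
  positivity

lemma swapEps_le_half (d : ℕ) : swapEps d ≤ 1 / 2 := by
  unfold swapEps
  nlinarith [Nat.cast_inv_le_one (α := ℝ) d]

lemma swapR_mem_Icc {d : ℕ} (hd : 0 < d) : swapR d ∈ Set.Icc (swapEps d ^ 5) (1 / 2) := by
  obtain ⟨r, hr, hr_eq⟩ := exists_sq_sub_cube_eq (swapEps_pos hd) (swapEps_le_half d)
  have hlow : ∀ s ∈ {s : ℝ | 0 < s ∧
      s ^ 2 - s ^ 3 = swapEps d ^ 10 + swapEps d ^ 20 * arsinh s}, swapEps d ^ 5 ≤ s :=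
    fun s hs => pow_five_le_of_sq_sub_cube_eq hs.1.le hs.2
  exact ⟨le_csInf ⟨r, hr.1, hr_eq⟩ hlow, (csInf_le ⟨_, hlow⟩ ⟨hr.1, hr_eq⟩).trans hr.2⟩

lemma swapBeta_comparable_log_sqrt {d : ℕ} (hd : 0 < d) (z : ℂ) :
    swapEps d ^ 20 * log √(1 + ‖z‖ ^ 2) ≤ swapBeta d z ∧
      swapBeta d z ≤ 9 * log √(1 + ‖z‖ ^ 2) := by
  obtain ⟨hr₀, hr₁⟩ := swapR_mem_Icc hd
  have hε₀ := (swapEps_pos hd).le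
  have hε₁ : swapEps d ≤ 1 := (swapEps_le_half d).trans (by norm_num)
  rw [swapBeta]
  split_ifs with hz
  · obtain ⟨hlow, hupp⟩ := sq_sub_cube_comparable_log_sqrt (norm_nonneg z) (hz.trans hr₁)
    have hℓ := log_sqrt_one_add_sq_nonneg ‖z‖
    have hε20 : swapEps d ^ 20 ≤ 1 := pow_le_one₀ hε₀ hε₁
    constructor <;> nlinarith
  · exact pow_add_arsinh_comparable_log_sqrt hε₀ hε₁ (hr₀.trans (not_le.mp hz).le)

theorem swapBeta_comparable_log (d : ℕ) (hd : 2 ≤ d) :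
    ∃ C : ℝ, 0 < C ∧ ∀ a b : ℂ,
      ‖a‖ ^ 2 = 1 + ‖b‖ ^ 2 →
      C⁻¹ * Real.log (‖a‖) ≤ swapBeta d b ∧
      swapBeta d b ≤ C * Real.log (‖a‖) := by
  have hε : 0 < swapEps d := swapEps_pos (by omega)
  have hε20_pos : 0 < swapEps d ^ 20 := pow_pos hε 20
  have hε20_le : swapEps d ^ 20 ≤ 1 := pow_le_one₀ hε.le (by linarith [swapEps_le_half d])
  refine ⟨9 / swapEps d ^ 20, by positivity, fun a b hab => ?_⟩
  have ha : ‖a‖ = √(1 + ‖b‖ ^ 2) :=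
    ((sqrt_eq_iff_eq_sq (by positivity) (norm_nonneg a)).mpr hab.symm).symm
  obtain ⟨hlow, hupp⟩ := swapBeta_comparable_log_sqrt (d := d) (by omega) b
  have hℓ := log_sqrt_one_add_sq_nonneg ‖b‖
  rw [ha, inv_div]
  constructor
  · calc swapEps d ^ 20 / 9 * log √(1 + ‖b‖ ^ 2)
        ≤ swapEps d ^ 20 * log √(1 + ‖b‖ ^ 2) := by gcongr; linarith
      _ ≤ swapBeta d b := hlow
  · calc swapBeta d b ≤ 9 * log √(1 + ‖b‖ ^ 2) := hupp
      _ ≤ 9 / swapEps d ^ 20 * log √(1 + ‖b‖ ^ 2) := by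
        gcongr
        exact le_div_self (by norm_num) hε20_pos hε20_le
end

section
/- Let γ := exp(2πi/3). For a 2×2 complex matrix M and a cube root of unity δ, define M_δ := [[M₁₁, δ·M₁₂], [δ²·M₂₁, M₂₂]]. Then there exist 2×2 complex matrices A, B, C of SU(1,1) form such that ∏_{δ : δ³ = 1} ‖A_{δ²}·B_δ·C‖ > ‖A‖³·‖B‖³·‖C‖³. Consequently, the function G ↦ log ‖G‖ does not satisfy the swapping inequality for d = 3. -/
/-- The twisted matrix `M_δ = [[M₁₁, δ·M₁₂], [δ²·M₂₁, M₂₂]]`. -/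
def twist (δ : ℂ) (M : Matrix (Fin 2) (Fin 2) ℂ) : Matrix (Fin 2) (Fin 2) ℂ :=
  !![M 0 0, δ * M 0 1; δ ^ 2 * M 1 0, M 1 1]

open Finset Polynomial ComplexConjugate

namespace IsPrimitiveRoot

variable {R : Type*} [CommRing R] [IsDomain R] {ζ : R} {n : ℕ}

theorem nthRootsFinset_one_eq_image [DecidableEq R] (hζ : IsPrimitiveRoot ζ n) :
    nthRootsFinset n (1 : R) = (range n).image (ζ ^ ·) := by
  refine (eq_of_subset_of_card_le (fun x hx ↦ ?_) ?_).symm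
  · obtain ⟨k, hk, rfl⟩ := mem_image.1 hx
    exact (Polynomial.mem_nthRootsFinset (k.zero_le.trans_lt (mem_range.1 hk)) 1).2
      (by rw [pow_right_comm, hζ.pow_eq_one, one_pow])
  · rw [hζ.card_nthRootsFinset, card_image_of_injOn hζ.injOn_pow, card_range]

theorem prod_nthRootsFinset_one {M : Type*} [CommMonoid M] (hζ : IsPrimitiveRoot ζ n)
    (f : R → M) : ∏ δ ∈ nthRootsFinset n (1 : R), f δ = ∏ k ∈ range n, f (ζ ^ k) := by
  classical
  rw [hζ.nthRootsFinset_one_eq_image, prod_image hζ.injOn_pow]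

theorem sq_norm_ofReal_add_mul_add_mul_sq {ζ : ℂ} (hζ : IsPrimitiveRoot ζ 3) (x y z : ℝ) :
    ‖(x : ℂ) + y * ζ + z * ζ ^ 2‖ ^ 2 = x ^ 2 + y ^ 2 + z ^ 2 - x * y - y * z - z * x := by
  have h3 : ζ ^ 3 = 1 := hζ.pow_eq_one
  have hsum : 1 + ζ + ζ ^ 2 = 0 := by
    simpa [sum_range_succ] using hζ.geom_sum_eq_zero (by norm_num)
  have hconj : conj ζ = ζ ^ 2 := by
    rw [← RCLike.inv_eq_conj (hζ.norm'_eq_one three_ne_zero),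
      inv_eq_of_mul_eq_one_right (by rw [← pow_succ', h3])]
  apply Complex.ofReal_injective
  rw [Complex.sq_norm, ← Complex.mul_conj]
  simp only [map_add, map_mul, Complex.conj_ofReal, map_pow, hconj]
  push_cast
  linear_combination (x * y + x * z + y * z : ℂ) * hsum +
    (x * z * ζ + y ^ 2 + y * z * ζ ^ 2 + y * z * ζ + z ^ 2 * (ζ ^ 3 + 1) : ℂ) * h3

end IsPrimitiveRoot

def boost (a b : ℝ) : Matrix (Fin 2) (Fin 2) ℂ :=
  !![(a : ℂ), b; b, a]

theorem su11_boost {a b : ℝ} (h : a ^ 2 - b ^ 2 = 1) : SU11 (boost a b) :=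
  ⟨a, b, by simp [boost], by simpa using h⟩

theorem hsNorm_nonneg (M : Matrix (Fin 2) (Fin 2) ℂ) : 0 ≤ hsNorm M :=
  Real.sqrt_nonneg _

theorem sq_hsNorm (M : Matrix (Fin 2) (Fin 2) ℂ) :
    hsNorm M ^ 2 = ‖M 0 0‖ ^ 2 + ‖M 0 1‖ ^ 2 :=
  Real.sq_sqrt (by positivity)

theorem sq_hsNorm_boost (a b : ℝ) : hsNorm (boost a b) ^ 2 = a ^ 2 + b ^ 2 := by
  simp [sq_hsNorm, boost]

theorem sq_hsNorm_twist_mul_twist_mul_boost {δ : ℂ} (hδ : δ ^ 3 = 1) (a b c d : ℝ) :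
    hsNorm (twist (δ ^ 2) (boost a b) * twist δ (boost c d) * boost a b) ^ 2 =
      ‖((a ^ 2 * c : ℝ) : ℂ) + (2 * a * b * d : ℝ) * δ + (b ^ 2 * c : ℝ) * δ ^ 2‖ ^ 2
        + ‖((a * b * c : ℝ) : ℂ) + ((a ^ 2 + b ^ 2) * d : ℝ) * δ
            + (a * b * c : ℝ) * δ ^ 2‖ ^ 2 := by
  rw [sq_hsNorm]
  simp only [twist, boost, Matrix.mul_fin_two, Matrix.of_apply, Matrix.cons_val_zero,
    Matrix.cons_val_one, Matrix.cons_val_fin_one, Matrix.cons_val']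
  push_cast
  congr 3
  · linear_combination (a * b * d * δ : ℂ) * hδ
  · linear_combination (b ^ 2 * d * δ : ℂ) * hδ

theorem hs_log_fails_swapping :
    ∃ A B C : Matrix (Fin 2) (Fin 2) ℂ, SU11 A ∧ SU11 B ∧ SU11 C ∧
      hsNorm A ^ 3 * hsNorm B ^ 3 * hsNorm C ^ 3 <
        ∏ δ ∈ Polynomial.nthRootsFinset 3 (1 : ℂ),
          hsNorm (twist (δ ^ 2) A * twist δ B * C) := by
  set A := boost (13 / 5) (12 / 5)
  set B := boost (13 / 12) (-5 / 12)
  have h_one : hsNorm (twist (1 ^ 2) A * twist 1 B * A) ^ 2 = 6250081 / 45000 := by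
    rw [sq_hsNorm_twist_mul_twist_mul_boost (one_pow 3)]
    simp only [one_pow, mul_one, ← Complex.ofReal_add, Complex.norm_real, Real.norm_eq_abs,
      sq_abs]
    norm_num
  have h_prim : ∀ δ : ℂ, IsPrimitiveRoot δ 3 →
      hsNorm (twist (δ ^ 2) A * twist δ B * A) ^ 2 = 12954649 / 45000 := by
    intro δ hδ
    rw [sq_hsNorm_twist_mul_twist_mul_boost hδ.pow_eq_one, hδ.sq_norm_ofReal_add_mul_add_mul_sq,
      hδ.sq_norm_ofReal_add_mul_add_mul_sq]
    norm_num
  refine ⟨A, B, A, su11_boost (by norm_num), su11_boost (by norm_num), su11_boost (by norm_num),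
    lt_of_pow_lt_pow_left₀ 2 (prod_nonneg fun _ _ ↦ hsNorm_nonneg _) ?_⟩
  have hζ := Complex.isPrimitiveRoot_exp 3 three_ne_zero
  calc (hsNorm A ^ 3 * hsNorm B ^ 3 * hsNorm A ^ 3) ^ 2
      = (hsNorm A ^ 2) ^ 6 * (hsNorm B ^ 2) ^ 3 := by ring
    _ = (313 / 25) ^ 6 * (97 / 72) ^ 3 := by
      rw [sq_hsNorm_boost, sq_hsNorm_boost]; norm_num
    _ < 6250081 / 45000 * 12954649 / 45000 * 12954649 / 45000 := by norm_num
    _ = (∏ δ ∈ nthRootsFinset 3 (1 : ℂ), hsNorm (twist (δ ^ 2) A * twist δ B * A)) ^ 2 := by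
      rw [← prod_pow, hζ.prod_nthRootsFinset_one]
      simp only [prod_range_succ, prod_range_zero, one_mul, pow_zero, pow_one]
      rw [h_one, h_prim _ hζ, h_prim _ (hζ.pow_of_coprime 2 (by norm_num))]
      ring
end

section
/- There exists an absolute constant C > 0 with the following property. Let F : ℝ → ℂ be integrable and compactly supported, let k ∈ ℝ, and let G(k,·) be a solution of the real-line scattering ODE with potential F at spectral parameter k. Then sup_{x ∈ ℝ} sqrt(log |a(k,x)|) ≤ C·∫_ℝ |F(t)| dt. (Each |a(k,x)| ≥ 1, so log |a(k,x)| ≥ 0.) -/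
open MeasureTheory Set

/-- The matrix potential `W(k,t)` for the real-line scattering ODE. -/
noncomputable def WmatLine (F : ℝ → ℂ) (k : ℂ) (t : ℝ) : Matrix (Fin 2) (Fin 2) ℂ :=
  !![0, F t * Complex.exp (2 * Complex.I * k * t);
     (starRingEnd ℂ) (F t) * Complex.exp (-(2 * Complex.I * k * t)), 0]

/-- `G` is a solution of the real-line scattering ODE with potential `F`
at spectral parameter `k`. -/
def IsSolutionLine (F : ℝ → ℂ) (k : ℂ) (G : ℝ → Matrix (Fin 2) (Fin 2) ℂ) : Prop :=
  Continuous G ∧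
  ∀ x : ℝ, ∀ i j : Fin 2,
    G x i j = (1 : Matrix (Fin 2) (Fin 2) ℂ) i j +
      ∫ t in Set.Iic x, (WmatLine F k t * G t) i j

/-! For real `k` the coefficients of the off-diagonal system have modulus `f = ‖F‖`, so
`α = ‖a‖`, `β = ‖b‖` satisfy `α w ≤ α u + ∫_u^w f β` and `β w ≤ β u + ∫_u^w f α`, with
`α = 1`, `β = 0` to the left of the support of `F`. On an interval of `f`-mass at most `1/2`
the function `max α β` at most doubles, and chaining such intervals gives
`α ≤ 2 ^ ⌈2 ‖F‖₁⌉`. When `‖F‖₁ ≤ 1/2`, feeding `β ≤ 2 ‖F‖₁` back into the inequality for `α`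
gives `α ≤ 1 + 2 ‖F‖₁ ^ 2`. Either way `log α ≤ (3 ‖F‖₁) ^ 2`. -/

section GrowthBound

variable {f g : ℝ → ℝ}

theorem intervalIntegral_mul_le_mul_integral {u w : ℝ} {B : ℝ} (huw : u ≤ w)
    (hf : ∀ a b, IntervalIntegrable f volume a b) (hf0 : 0 ≤ f) (hg : Continuous g)
    (hgB : ∀ t ∈ Icc u w, g t ≤ B) :
    ∫ t in u..w, f t * g t ≤ B * ∫ t in u..w, f t := by
  rw [← intervalIntegral.integral_const_mul]
  refine intervalIntegral.integral_mono_on huw ((hf u w).mul_continuousOn hg.continuousOn)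
    ((hf u w).const_mul B) fun t ht => ?_
  rw [mul_comm B]
  exact mul_le_mul_of_nonneg_left (hgB t ht) (hf0 t)

/-- The supremum `B` of `g` on `[u, v]` satisfies `B ≤ g u + B / 2`. -/
theorem le_two_mul_of_integral_le_half (hf : ∀ a b, IntervalIntegrable f volume a b)
    (hf0 : 0 ≤ f) (hg : Continuous g) (hg0 : 0 ≤ g)
    (hgrow : ∀ u w, u ≤ w → g w ≤ g u + ∫ t in u..w, f t * g t)
    {u v : ℝ} (huv : u ≤ v) (hmass : ∫ t in u..v, f t ≤ 1 / 2) {w : ℝ} (hw : w ∈ Icc u v) :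
    g w ≤ 2 * g u := by
  obtain ⟨z, hz, hzmax⟩ := isCompact_Icc.exists_isMaxOn ⟨u, left_mem_Icc.2 huv⟩ hg.continuousOn
  have hmass_z : ∫ t in u..z, f t ≤ 1 / 2 :=
    (intervalIntegral.integral_mono_interval le_rfl hz.1 hz.2
      (Filter.Eventually.of_forall hf0) (hf u v)).trans hmass
  have : g z ≤ g u + g z / 2 :=
    calc g z ≤ g u + ∫ t in u..z, f t * g t := hgrow u z hz.1
      _ ≤ g u + g z * ∫ t in u..z, f t := by
        gcongr
        exact intervalIntegral_mul_le_mul_integral hz.1 hf hf0 hg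
          fun t ht => isMaxOn_iff.1 hzmax t ⟨ht.1, ht.2.trans hz.2⟩
      _ ≤ g u + g z / 2 := by
        have := mul_le_mul_of_nonneg_left hmass_z (hg0 z)
        linarith
  linarith [isMaxOn_iff.1 hzmax w hw]

theorem le_two_pow_mul_of_integral_le (hf : ∀ a b, IntervalIntegrable f volume a b)
    (hf0 : 0 ≤ f) (hg : Continuous g) (hg0 : 0 ≤ g)
    (hgrow : ∀ u w, u ≤ w → g w ≤ g u + ∫ t in u..w, f t * g t)
    {n : ℕ} (hn : 1 ≤ n) {u w : ℝ} (huw : u ≤ w) (hmass : ∫ t in u..w, f t ≤ n / 2) :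
    g w ≤ 2 ^ n * g u := by
  induction n, hn using Nat.le_induction generalizing u with
  | base =>
    simpa using le_two_mul_of_integral_le_half hf hf0 hg hg0 hgrow huw (by simpa using hmass)
      (right_mem_Icc.2 huw)
  | succ n hn ih =>
    by_cases hsmall : ∫ t in u..w, f t ≤ n / 2
    · calc g w ≤ 2 ^ n * g u := ih huw hsmall
        _ ≤ 2 ^ (n + 1) * g u := by gcongr; exacts [hg0 u, one_le_two, n.le_succ]
    · have hhalf : (1 / 2 : ℝ) ≤ n / 2 := by gcongr; exact_mod_cast hn
      obtain ⟨v, hv, hv_mass⟩ : ∃ v ∈ Icc u w, ∫ t in u..v, f t = 1 / 2 :=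
        intermediate_value_Icc huw (intervalIntegral.continuous_primitive hf u).continuousOn
          ⟨by simp, by linarith⟩
      have hvw : ∫ t in v..w, f t ≤ n / 2 := by
        rw [← intervalIntegral.integral_interval_sub_left (hf u w) (hf u v), hv_mass]
        push_cast at hmass
        linarith
      calc g w ≤ 2 ^ n * g v := ih hv.2 hvw
        _ ≤ 2 ^ n * (2 * g u) := by
          gcongr
          exact le_two_mul_of_integral_le_half hf hf0 hg hg0 hgrow hv.1 hv_mass.le
            (right_mem_Icc.2 hv.1)
        _ = 2 ^ (n + 1) * g u := by ring

end GrowthBound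

theorem log_le_log_of_one_le {x y : ℝ} (hx : 0 ≤ x) (hxy : x ≤ y) (hy : 1 ≤ y) :
    Real.log x ≤ Real.log y := by
  rcases hx.eq_or_lt with rfl | hx
  · simpa using Real.log_nonneg hy
  · exact Real.log_le_log hx hxy

/-- Satisfied by the norms of the components of a solution of `a' = p b`, `b' = q a`
with `‖p‖, ‖q‖ ≤ f`. -/
structure IsCoupledSubsolution (f α β : ℝ → ℝ) : Prop where
  continuous_fst : Continuous α
  continuous_snd : Continuous β
  nonneg_fst : 0 ≤ α
  nonneg_snd : 0 ≤ β
  le_fst : ∀ u w, u ≤ w → α w ≤ α u + ∫ t in u..w, f t * β t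
  le_snd : ∀ u w, u ≤ w → β w ≤ β u + ∫ t in u..w, f t * α t

namespace IsCoupledSubsolution

variable {f α β : ℝ → ℝ} {c x m : ℝ}

theorem continuous_max (h : IsCoupledSubsolution f α β) : Continuous fun t => max (α t) (β t) :=
  h.continuous_fst.max h.continuous_snd

theorem nonneg_max (h : IsCoupledSubsolution f α β) : 0 ≤ fun t => max (α t) (β t) :=
  fun t => (h.nonneg_fst t).trans (le_max_left _ _)

theorem max_le_add_integral (h : IsCoupledSubsolution f α β)
    (hf : ∀ a b, IntervalIntegrable f volume a b) (hf0 : 0 ≤ f) (u w : ℝ) (huw : u ≤ w) :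
    max (α w) (β w) ≤ max (α u) (β u) + ∫ t in u..w, f t * max (α t) (β t) := by
  have hmono {γ : ℝ → ℝ} (hγ : Continuous γ) (hγ_le : ∀ t, γ t ≤ max (α t) (β t)) :
      ∫ t in u..w, f t * γ t ≤ ∫ t in u..w, f t * max (α t) (β t) :=
    intervalIntegral.integral_mono_on huw ((hf u w).mul_continuousOn hγ.continuousOn)
      ((hf u w).mul_continuousOn h.continuous_max.continuousOn)
      fun t _ => mul_le_mul_of_nonneg_left (hγ_le t) (hf0 t)
  refine max_le ((h.le_fst u w huw).trans (add_le_add (le_max_left _ _) ?_))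
    ((h.le_snd u w huw).trans (add_le_add (le_max_right _ _) ?_))
  exacts [hmono h.continuous_snd fun t => le_max_right _ _,
    hmono h.continuous_fst fun t => le_max_left _ _]

theorem le_two_pow (h : IsCoupledSubsolution f α β)
    (hf : ∀ a b, IntervalIntegrable f volume a b) (hf0 : 0 ≤ f) (hαc : α c = 1) (hβc : β c = 0)
    {n : ℕ} (hn : 1 ≤ n) (hcx : c ≤ x) (hmass : ∫ t in c..x, f t ≤ n / 2) :
    α x ≤ 2 ^ n := by
  have := le_two_pow_mul_of_integral_le hf hf0 h.continuous_max h.nonneg_max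
    (h.max_le_add_integral hf hf0) hn hcx hmass
  simp only [hαc, hβc, zero_le_one, max_eq_left, mul_one] at this
  exact (le_max_left _ _).trans this

theorem le_one_add_two_mul_sq (h : IsCoupledSubsolution f α β)
    (hf : ∀ a b, IntervalIntegrable f volume a b) (hf0 : 0 ≤ f) (hαc : α c = 1) (hβc : β c = 0)
    (hcx : c ≤ x) (hmass : ∫ t in c..x, f t ≤ m) (hm : m ≤ 1 / 2) :
    α x ≤ 1 + 2 * m ^ 2 := by
  have hmass_le {t : ℝ} (ht : t ∈ Icc c x) : ∫ s in c..t, f s ≤ m :=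
    (intervalIntegral.integral_mono_interval le_rfl ht.1 ht.2
      (Filter.Eventually.of_forall hf0) (hf c x)).trans hmass
  have hm0 : 0 ≤ m := (intervalIntegral.integral_nonneg hcx fun t _ => hf0 t).trans hmass
  have hα2 {t : ℝ} (ht : t ∈ Icc c x) : α t ≤ 2 := by
    have := le_two_mul_of_integral_le_half hf hf0 h.continuous_max h.nonneg_max
      (h.max_le_add_integral hf hf0) hcx (hmass.trans hm) ht
    simp only [hαc, hβc, zero_le_one, max_eq_left, mul_one] at this
    exact (le_max_left _ _).trans this
  have hβ {t : ℝ} (ht : t ∈ Icc c x) : β t ≤ 2 * m :=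
    calc β t ≤ β c + ∫ s in c..t, f s * α s := h.le_snd c t ht.1
      _ ≤ 0 + 2 * ∫ s in c..t, f s := by
        rw [hβc]
        gcongr
        exact intervalIntegral_mul_le_mul_integral ht.1 hf hf0 h.continuous_fst
          fun s hs => hα2 ⟨hs.1, hs.2.trans ht.2⟩
      _ ≤ 2 * m := by linarith [hmass_le ht]
  calc α x ≤ α c + ∫ t in c..x, f t * β t := h.le_fst c x hcx
    _ ≤ 1 + 2 * m * ∫ t in c..x, f t := by
      rw [hαc]
      gcongr
      exact intervalIntegral_mul_le_mul_integral hcx hf hf0 h.continuous_snd fun t => hβ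
    _ ≤ 1 + 2 * m ^ 2 := by nlinarith

theorem log_le_sq (h : IsCoupledSubsolution f α β)
    (hf : ∀ a b, IntervalIntegrable f volume a b) (hf0 : 0 ≤ f) (hαc : α c = 1) (hβc : β c = 0)
    (hcx : c ≤ x) (hmass : ∫ t in c..x, f t ≤ m) :
    Real.log (α x) ≤ (3 * m) ^ 2 := by
  have hm0 : 0 ≤ m := (intervalIntegral.integral_nonneg hcx fun t _ => hf0 t).trans hmass
  rcases le_or_gt m (1 / 2) with hm | hm
  · calc Real.log (α x) ≤ Real.log (1 + 2 * m ^ 2) :=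
          log_le_log_of_one_le (h.nonneg_fst x)
            (h.le_one_add_two_mul_sq hf hf0 hαc hβc hcx hmass hm) (by nlinarith)
      _ ≤ 2 * m ^ 2 := by linarith [Real.log_le_sub_one_of_pos (by positivity : 0 < 1 + 2 * m ^ 2)]
      _ ≤ (3 * m) ^ 2 := by nlinarith
  · set n := ⌈2 * m⌉₊
    have hn : 1 ≤ n := Nat.one_le_iff_ne_zero.2 (by positivity)
    have hmn : m ≤ n / 2 := by linarith [Nat.le_ceil (2 * m)]
    have hn_lt : (n : ℝ) < 2 * m + 1 := Nat.ceil_lt_add_one (by positivity)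
    calc Real.log (α x) ≤ Real.log (2 ^ n) :=
          log_le_log_of_one_le (h.nonneg_fst x) (h.le_two_pow hf hf0 hαc hβc hn hcx
            (hmass.trans hmn)) (one_le_pow₀ one_le_two)
      _ = n * Real.log 2 := Real.log_pow 2 n
      _ ≤ n := by
        have := Real.log_le_sub_one_of_pos two_pos
        nlinarith [Nat.cast_nonneg (α := ℝ) n]
      _ ≤ (3 * m) ^ 2 := by nlinarith

end IsCoupledSubsolution

theorem norm_le_norm_add_integral {h k p : ℝ → ℂ} {f : ℝ → ℝ} {h₀ : ℂ} {c : ℝ}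
    (hp : ∀ a b, IntervalIntegrable p volume a b) (hk : Continuous k)
    (hf : ∀ a b, IntervalIntegrable f volume a b) (hpf : ∀ t, ‖p t‖ ≤ f t)
    (hh : ∀ x, h x = h₀ + ∫ t in c..x, p t * k t) {u w : ℝ} (huw : u ≤ w) :
    ‖h w‖ ≤ ‖h u‖ + ∫ t in u..w, f t * ‖k t‖ := by
  have hpk a b : IntervalIntegrable (fun t => p t * k t) volume a b :=
    (hp a b).mul_continuousOn hk.continuousOn
  have hdiff : h w - h u = ∫ t in u..w, p t * k t := by
    rw [hh, hh, add_sub_add_left_eq_sub,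
      intervalIntegral.integral_interval_sub_left (hpk c w) (hpk c u)]
  calc ‖h w‖ ≤ ‖h u‖ + ‖h w - h u‖ := norm_le_norm_add_norm_sub' _ _
    _ ≤ ‖h u‖ + ∫ t in u..w, f t * ‖k t‖ := by
      rw [hdiff]
      gcongr
      refine intervalIntegral.norm_integral_le_of_norm_le huw
        (Filter.Eventually.of_forall fun t _ => ?_)
        ((hf u w).mul_continuousOn hk.norm.continuousOn)
      rw [norm_mul]
      exact mul_le_mul_of_nonneg_right (hpf t) (norm_nonneg _)

theorem setIntegral_Iic_eq_intervalIntegral {E : Type*} [NormedAddCommGroup E] [NormedSpace ℝ E]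
    {φ : ℝ → E} {c : ℝ} (hφ : ∀ t ≤ c, φ t = 0) (x : ℝ) :
    ∫ t in Iic x, φ t = ∫ t in c..x, φ t := by
  rcases le_total c x with hcx | hxc
  · rw [intervalIntegral.integral_of_le hcx]
    exact setIntegral_eq_of_subset_of_forall_sdiff_eq_zero measurableSet_Iic Ioc_subset_Iic_self
      fun t ht => hφ t (not_lt.1 fun hct => ht.2 ⟨hct, ht.1⟩)
  · rw [intervalIntegral.integral_of_ge hxc,
      setIntegral_eq_zero_of_forall_eq_zero fun t ht => hφ t (mem_Iic.1 ht |>.trans hxc),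
      setIntegral_eq_zero_of_forall_eq_zero fun t ht => hφ t ht.2, neg_zero]

theorem HasCompactSupport.exists_le_forall_le_eq_zero {M : Type*} [Zero M] {F : ℝ → M}
    (hF : HasCompactSupport F)
    (x : ℝ) : ∃ c ≤ x, ∀ t ≤ c, F t = 0 := by
  obtain ⟨m, hm⟩ := hF.isCompact.bddBelow
  refine ⟨min x (m - 1), min_le_left _ _, fun t ht => image_eq_zero_of_notMem_tsupport
    fun hts => ?_⟩
  linarith [hm hts, min_le_right x (m - 1)]

theorem norm_exp_two_mul_I_mul (k t : ℝ) : ‖Complex.exp (2 * Complex.I * k * t)‖ = 1 := by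
  rw [show 2 * Complex.I * k * t = ((2 * k * t : ℝ) : ℂ) * Complex.I by push_cast; ring]
  exact Complex.norm_exp_ofReal_mul_I _

theorem norm_exp_neg_two_mul_I_mul (k t : ℝ) : ‖Complex.exp (-(2 * Complex.I * k * t))‖ = 1 := by
  rw [Complex.exp_neg, norm_inv, norm_exp_two_mul_I_mul, inv_one]

namespace IsSolutionLine

variable {F : ℝ → ℂ} {G : ℝ → Matrix (Fin 2) (Fin 2) ℂ} {c : ℝ}

theorem apply_zero_zero {k : ℂ} (hG : IsSolutionLine F k G) (hc : ∀ t ≤ c, F t = 0) (x : ℝ) :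
    G x 0 0 = 1 + ∫ t in c..x, F t * Complex.exp (2 * Complex.I * k * t) * G t 1 0 := by
  rw [hG.2 x 0 0, ← setIntegral_Iic_eq_intervalIntegral fun t ht => by simp [hc t ht]]
  simp [WmatLine, Matrix.mul_apply]

theorem apply_one_zero {k : ℂ} (hG : IsSolutionLine F k G) (hc : ∀ t ≤ c, F t = 0) (x : ℝ) :
    G x 1 0 =
      ∫ t in c..x, starRingEnd ℂ (F t) * Complex.exp (-(2 * Complex.I * k * t)) * G t 0 0 := by
  rw [hG.2 x 1 0, ← setIntegral_Iic_eq_intervalIntegral fun t ht => by simp [hc t ht]]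
  simp [WmatLine, Matrix.mul_apply]

theorem isCoupledSubsolution {k : ℝ} (hG : IsSolutionLine F k G) (hF : Integrable F)
    (hc : ∀ t ≤ c, F t = 0) :
    IsCoupledSubsolution (fun t => ‖F t‖) (fun x => ‖G x 0 0‖) (fun x => ‖G x 1 0‖) := by
  have hf a b : IntervalIntegrable (fun t => ‖F t‖) volume a b := hF.norm.intervalIntegrable
  have hconj : Integrable fun t => starRingEnd ℂ (F t) :=
    hF.mono (Complex.continuous_conj.comp_aestronglyMeasurable hF.aestronglyMeasurable)
      (.of_forall fun t => by simp)
  refine ⟨(hG.1.matrix_elem 0 0).norm, (hG.1.matrix_elem 1 0).norm, fun x => norm_nonneg _,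
    fun x => norm_nonneg _, fun u w huw => ?_, fun u w huw => ?_⟩
  · refine norm_le_norm_add_integral (p := fun t => F t * Complex.exp (2 * Complex.I * k * t))
      (k := fun t => G t 1 0) (fun a b => hF.intervalIntegrable.mul_continuousOn (by fun_prop))
      (hG.1.matrix_elem 1 0) hf (fun t => ?_) (hG.apply_zero_zero hc) huw
    rw [norm_mul, norm_exp_two_mul_I_mul, mul_one]
  · refine norm_le_norm_add_integral
      (p := fun t => starRingEnd ℂ (F t) * Complex.exp (-(2 * Complex.I * k * t)))
      (k := fun t => G t 0 0) (fun a b => hconj.intervalIntegrable.mul_continuousOn (by fun_prop))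
      (hG.1.matrix_elem 0 0) hf (fun t => ?_) (h := fun x => G x 1 0) (h₀ := 0)
      (fun x => by rw [hG.apply_one_zero hc, zero_add]) huw
    rw [norm_mul, norm_exp_neg_two_mul_I_mul, mul_one, Complex.norm_conj]

end IsSolutionLine

theorem maximal_riemann_lebesgue :
    ∃ C : ℝ, 0 < C ∧
      ∀ F : ℝ → ℂ, Integrable F → HasCompactSupport F →
      ∀ k : ℝ, ∀ G : ℝ → Matrix (Fin 2) (Fin 2) ℂ,
        IsSolutionLine F (k : ℂ) G →
        ∀ x : ℝ, Real.sqrt (Real.log (‖G x 0 0‖)) ≤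
          C * ∫ t : ℝ, ‖F t‖ := by
  refine ⟨3, three_pos, fun F hF hFc k G hG x => ?_⟩
  obtain ⟨c, hcx, hc⟩ := hFc.exists_le_forall_le_eq_zero x
  have hmass : ∫ t in c..x, ‖F t‖ ≤ ∫ t, ‖F t‖ := by
    rw [intervalIntegral.integral_of_le hcx]
    exact setIntegral_le_integral hF.norm (.of_forall fun t => norm_nonneg _)
  have hlog := (hG.isCoupledSubsolution hF hc).log_le_sq
    (fun a b => hF.norm.intervalIntegrable) (fun t => norm_nonneg _)
    (by simp [hG.apply_zero_zero hc]) (by simp [hG.apply_one_zero hc]) hcx hmass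
  exact Real.sqrt_le_iff.2 ⟨by positivity, hlog⟩
end
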